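/- arXiv:math/0703237 — 6 statements merged into one kernel-verified Lean document; each statement's English description precedes it below -/
import Mathlib

section
/- Let V be a finite-dimensional complex normed vector space, let q ∈ ℂ satisfy 0 < |q| < 1, and let m : V → V be a unipotent linear automorphism, i.e. (m − id)^d = 0 for some d ∈ ℕ. If f : ℂ ∖ {0} → V is holomorphic and satisfies f(q·z) = m(f(z)) for all z ≠ 0, then f is constant, and its constant value v satisfies m(v) = v. -/
open Filter Topology Asymptotics

lemma pow_expand {V : Type*} [AddCommGroup V] [Module ℂ V]
    (m : V →ₗ[ℂ] V) (d : ℕ) (hm : (m - 1) ^ d = 0) (n : ℕ) :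
    m ^ n = ∑ k ∈ Finset.range d, (n.choose k : ℂ) • (m - 1) ^ k := by
  set N : Module.End ℂ V := m - 1 with hN
  have hmN : m = N + 1 := by rw [hN, sub_add_cancel]
  have h2 : ∀ k, (N ^ k * 1 ^ (n - k) * (n.choose k : Module.End ℂ V)) = (n.choose k : ℂ) • N ^ k := by
    intro k
    rw [one_pow, mul_one, (Nat.commute_cast (N ^ k) (n.choose k)).eq,
      ← nsmul_eq_mul, ← Nat.cast_smul_eq_nsmul ℂ]
  have h1 : m ^ n = ∑ k ∈ Finset.range (n + 1), (n.choose k : ℂ) • N ^ k := by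
    rw [hmN, (Commute.one_right N).add_pow]
    exact Finset.sum_congr rfl fun k _ => h2 k
  rw [h1]
  rcases le_total (n + 1) d with h | h
  · exact Finset.sum_subset (Finset.range_subset_range.2 h) (fun k _ hk => by
      rw [Nat.choose_eq_zero_of_lt (by simpa using hk), Nat.cast_zero, zero_smul])
  · exact (Finset.sum_subset (Finset.range_subset_range.2 h) (fun k _ hk => by
      rw [pow_eq_zero_of_le (by simpa using hk) hm, smul_zero])).symm

lemma pow_norm_bound {V : Type*} [NormedAddCommGroup V] [NormedSpace ℂ V]
    [FiniteDimensional ℂ V]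
    (m : V →ₗ[ℂ] V) (d : ℕ) (hm : (m - 1) ^ d = 0) :
    ∃ C : ℝ, 0 ≤ C ∧ ∀ (n : ℕ) (x : V), ‖(m ^ n) x‖ ≤ C * ((n : ℝ) + 1) ^ d * ‖x‖ := by
  set N : Module.End ℂ V := m - 1 with hN
  refine ⟨∑ k ∈ Finset.range d, ‖LinearMap.toContinuousLinearMap (N ^ k)‖,
    Finset.sum_nonneg fun _ _ => norm_nonneg _, fun n x => ?_⟩
  have h1 : (m ^ n) x = ∑ k ∈ Finset.range d, (n.choose k : ℂ) • ((N ^ k) x) := by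
    rw [pow_expand m d hm n]
    simp [hN]
  rw [h1, Finset.sum_mul, Finset.sum_mul]
  refine (norm_sum_le _ _).trans (Finset.sum_le_sum fun k hk => ?_)
  rw [norm_smul, Complex.norm_natCast]
  have hc : (n.choose k : ℝ) ≤ ((n : ℝ) + 1) ^ d := by
    have : (n.choose k : ℕ) ≤ (n + 1) ^ d :=
      (Nat.choose_le_pow n k).trans (Nat.pow_le_pow_left (Nat.le_succ n) k |>.trans
        (Nat.pow_le_pow_right (Nat.succ_pos n) (Finset.mem_range.1 hk).le))
    exact_mod_cast this
  have hNk : ‖(N ^ k) x‖ ≤ ‖LinearMap.toContinuousLinearMap (N ^ k)‖ * ‖x‖ :=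
    (LinearMap.toContinuousLinearMap (N ^ k)).le_opNorm x
  calc (n.choose k : ℝ) * ‖(N ^ k) x‖
      ≤ ((n : ℝ) + 1) ^ d * (‖LinearMap.toContinuousLinearMap (N ^ k)‖ * ‖x‖) :=
        mul_le_mul hc hNk (norm_nonneg _) (by positivity)
    _ = ‖LinearMap.toContinuousLinearMap (N ^ k)‖ * ((n : ℝ) + 1) ^ d * ‖x‖ := by ring

lemma ext_at_zero {V : Type*} [NormedAddCommGroup V] [NormedSpace ℂ V]
    [FiniteDimensional ℂ V]
    (q : ℂ) (hq0 : 0 < ‖q‖) (hq1 : ‖q‖ < 1)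
    (m : V →ₗ[ℂ] V) (d : ℕ) (hm : (m - 1) ^ d = 0)
    (f : ℂ → V)
    (hf : ∀ z : ℂ, z ≠ 0 → DifferentiableAt ℂ f z)
    (hqf : ∀ z : ℂ, z ≠ 0 → f (q * z) = m (f z)) :
    ∃ g : ℂ → V, Differentiable ℂ g ∧ ∀ z : ℂ, z ≠ 0 → g z = f z := by
  have hq : q ≠ 0 := fun h => by simp [h] at hq0
  -- iteration of the functional equation
  have hiter : ∀ (n : ℕ) (z : ℂ), z ≠ 0 → f (q ^ n * z) = (m ^ n) (f z) := by
    intro n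
    induction n with
    | zero => intro z hz; simp
    | succ n ih =>
        intro z hz
        have hz' : q ^ n * z ≠ 0 := mul_ne_zero (pow_ne_zero n hq) hz
        calc f (q ^ (n + 1) * z) = f (q * (q ^ n * z)) := by rw [pow_succ']; ring_nf
          _ = m (f (q ^ n * z)) := hqf _ hz'
          _ = m ((m ^ n) (f z)) := by rw [ih z hz]
          _ = (m ^ (n + 1)) (f z) := by
              rw [pow_succ', Module.End.mul_apply]
  -- bound on the fundamental annulus
  set A : Set ℂ := Metric.closedBall (0 : ℂ) 1 ∩ {w | ‖q‖ ≤ ‖w‖} with hA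
  have hAc : IsCompact A :=
    (isCompact_closedBall _ _).inter_right
      (isClosed_le continuous_const continuous_norm)
  have hAf : ContinuousOn f A := by
    intro w hw
    have hw0 : w ≠ 0 := by
      intro h
      rw [h] at hw
      simpa [hA, not_lt.2] using lt_irrefl (0:ℝ) (lt_of_lt_of_le hq0 (by simpa using hw.2))
    exact (hf w hw0).continuousAt.continuousWithinAt
  obtain ⟨M, hM⟩ := hAc.exists_bound_of_continuousOn hAf
  obtain ⟨C, hC0, hC⟩ := pow_norm_bound m d hm
  -- key pointwise bound
  have key : ∀ z : ℂ, z ≠ 0 → ‖z‖ ≤ 1 →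
      ∃ n : ℕ, ‖q‖ ^ (n + 1) < ‖z‖ ∧
        ‖z‖ ≤ ‖q‖ ^ n ∧
        ‖f z‖ ≤ C * ((n : ℝ) + 1) ^ d * M := by
    intro z hz hz1
    have hzpos : 0 < ‖z‖ := by
      simpa [norm_pos_iff] using hz
    have hex : ∃ n : ℕ, ‖q‖ ^ (n + 1) < ‖z‖ := by
      obtain ⟨n, hn⟩ := exists_pow_lt_of_lt_one hzpos hq1
      exact ⟨n, lt_of_le_of_lt (pow_le_pow_of_le_one (norm_nonneg q) hq1.le
        (Nat.le_succ n)) hn⟩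
    set n := Nat.find hex with hn
    have hn1 : ‖q‖ ^ (n + 1) < ‖z‖ := Nat.find_spec hex
    have hn2 : ‖z‖ ≤ ‖q‖ ^ n := by
      rcases Nat.eq_zero_or_pos n with h0 | h0
      · rw [h0]; simpa using hz1
      · have hmin := Nat.find_min hex (Nat.pred_lt h0.ne')
        rw [← hn] at hmin
        have he : n.pred + 1 = n := Nat.succ_pred_eq_of_pos h0
        rw [he] at hmin
        exact not_lt.1 hmin
    set w : ℂ := z / q ^ n with hw
    have hw0 : w ≠ 0 := div_ne_zero hz (pow_ne_zero n hq)
    have hwz : q ^ n * w = z := mul_div_cancel₀ z (pow_ne_zero n hq)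
    have habsw : ‖w‖ = ‖z‖ / ‖q‖ ^ n := by
      rw [hw, norm_div, norm_pow]
    have hwA : w ∈ A := by
      constructor
      · rw [Metric.mem_closedBall, Complex.dist_eq, sub_zero, habsw]
        exact div_le_one_of_le₀ hn2 (by positivity)
      · show ‖q‖ ≤ ‖w‖
        rw [habsw, le_div_iff₀ (by positivity)]
        calc ‖q‖ * ‖q‖ ^ n = ‖q‖ ^ (n + 1) := by ring
          _ ≤ ‖z‖ := hn1.le
    have hfz : f z = (m ^ n) (f w) := by rw [← hwz, hiter n w hw0]
    refine ⟨n, hn1, hn2, ?_⟩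
    rw [hfz]
    calc ‖(m ^ n) (f w)‖ ≤ C * ((n : ℝ) + 1) ^ d * ‖f w‖ := hC n (f w)
      _ ≤ C * ((n : ℝ) + 1) ^ d * M :=
          mul_le_mul_of_nonneg_left (hM w hwA) (by positivity)
  have hM0 : 0 ≤ M := le_trans (norm_nonneg (f 1))
    (hM 1 ⟨by simp, by simpa using hq1.le⟩)
  -- sequence tending to zero
  have habs : ‖‖q‖‖ < 1 := by
    rw [Real.norm_eq_abs, abs_of_nonneg (norm_nonneg q)]; exact hq1
  have t1 : Tendsto (fun n : ℕ => (n : ℝ) ^ d * ‖q‖ ^ n) atTop (𝓝 0) :=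
    (summable_pow_mul_geometric_of_norm_lt_one d habs).tendsto_atTop_zero
  have t2 : Tendsto (fun n : ℕ => ((n : ℝ) + 1) ^ d * ‖q‖ ^ n) atTop (𝓝 0) := by
    have h3 := (t1.comp (tendsto_add_atTop_nat 1)).const_mul ‖q‖⁻¹
    rw [mul_zero] at h3
    have heq : ∀ n : ℕ, ‖q‖⁻¹ *
        ((((n + 1 : ℕ) : ℝ)) ^ d * ‖q‖ ^ (n + 1)) =
        ((n : ℝ) + 1) ^ d * ‖q‖ ^ n := by
      intro n
      have hqne : ‖q‖ ≠ 0 := ne_of_gt hq0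
      push_cast
      field_simp
      ring
    exact h3.congr heq
  set seq : ℕ → ℝ := fun n =>
    ‖q‖ ^ n * (C * ((n : ℝ) + 1) ^ d * M + ‖f 0‖) with hseq
  have t3 : Tendsto seq atTop (𝓝 0) := by
    have ha := t2.const_mul (C * M)
    have hb := (tendsto_pow_atTop_nhds_zero_of_lt_one
      (norm_nonneg q) hq1).const_mul ‖f 0‖
    rw [mul_zero] at ha hb
    have hab := ha.add hb
    rw [add_zero] at hab
    exact hab.congr fun n => by simp only [hseq]; ring
  -- little-o estimate at 0
  have ho : (fun z => f z - f 0) =o[𝓝[≠] (0 : ℂ)] fun z => (z - 0)⁻¹ := by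
    rw [Asymptotics.isLittleO_iff]
    intro c hc
    obtain ⟨N, hN⟩ := Filter.eventually_atTop.1 (t3.eventually_lt_const hc)
    have hδ : (0 : ℝ) < ‖q‖ ^ N := by positivity
    have hball : ∀ᶠ z in 𝓝[≠] (0 : ℂ), ‖z‖ < ‖q‖ ^ N := by
      have hb : Metric.ball (0 : ℂ) (‖q‖ ^ N) ∈ 𝓝[≠] (0 : ℂ) :=
        nhdsWithin_le_nhds (Metric.ball_mem_nhds 0 hδ)
      filter_upwards [hb] with z hz
      simpa [Complex.dist_eq, sub_zero] using hz
    filter_upwards [hball, self_mem_nhdsWithin] with z hzδ hz0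
    have hz0' : z ≠ 0 := hz0
    have hz1 : ‖z‖ ≤ 1 :=
      hzδ.le.trans (pow_le_one₀ (norm_nonneg q) hq1.le)
    obtain ⟨n, hn1, hn2, hn3⟩ := key z hz0' hz1
    have hnN : N ≤ n := by
      by_contra hcon
      push_neg at hcon
      have hle : ‖q‖ ^ N ≤ ‖q‖ ^ (n + 1) :=
        pow_le_pow_of_le_one (norm_nonneg q) hq1.le (by omega)
      exact absurd (lt_trans (lt_of_le_of_lt hle hn1) hzδ) (lt_irrefl _)
    have hzpos : 0 < ‖z‖ := by simpa [norm_pos_iff] using hz0'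
    rw [sub_zero, norm_inv, ← div_eq_mul_inv,
      le_div_iff₀ hzpos]
    refine le_of_lt ?_
    calc ‖f z - f 0‖ * ‖z‖
        ≤ (C * ((n : ℝ) + 1) ^ d * M + ‖f 0‖) * ‖q‖ ^ n :=
          mul_le_mul ((norm_sub_le _ _).trans (add_le_add_left hn3 _)) hn2
            (norm_nonneg z) (by positivity)
      _ = seq n := by simp only [hseq]; ring
      _ < c := hN n hnN
  have hd' : DifferentiableOn ℂ f (Set.univ \ {0}) := fun z hz =>
    (hf z hz.2).differentiableWithinAt
  have hupd := Complex.differentiableOn_update_limUnder_of_isLittleO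
    Filter.univ_mem hd' ho
  exact ⟨_, differentiableOn_univ.1 hupd, fun z hz => Function.update_of_ne hz _ _⟩

/-- Let `V` be a finite-dimensional complex normed vector space,
`q ∈ ℂ` with `0 < |q| < 1`, and `m : V → V` a unipotent linear automorphism
(i.e. `(m - id)^d = 0` for some `d`).  If `f` is holomorphic on `ℂ ∖ {0}` and satisfies
`f (q • z) = m (f z)` for all `z ≠ 0`, then `f` is constant on `ℂ ∖ {0}` and its
value `v` satisfies `m v = v`. -/
theorem stmt0 {V : Type*} [NormedAddCommGroup V] [NormedSpace ℂ V]
    [FiniteDimensional ℂ V]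
    (q : ℂ) (hq0 : 0 < ‖q‖) (hq1 : ‖q‖ < 1)
    (m : V →ₗ[ℂ] V) (d : ℕ) (hm : (m - LinearMap.id) ^ d = 0)
    (f : ℂ → V)
    (hf : ∀ z : ℂ, z ≠ 0 → DifferentiableAt ℂ f z)
    (hqf : ∀ z : ℂ, z ≠ 0 → f (q * z) = m (f z)) :
    ∃ v : V, m v = v ∧ ∀ z : ℂ, z ≠ 0 → f z = v := by
  have hq : q ≠ 0 := fun h => by simp [h] at hq0
  have hm1 : ((m - 1 : Module.End ℂ V)) ^ d = 0 := hm
  have hNnil : IsNilpotent (m - 1 : Module.End ℂ V) := ⟨d, hm1⟩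
  have hu : IsUnit m := by
    have h1 := hNnil.isUnit_one_add
    have he : (1 : Module.End ℂ V) + (m - 1) = m := by abel
    rwa [he] at h1
  obtain ⟨u, hu⟩ := hu
  set m' : Module.End ℂ V := ↑u⁻¹ with hm'def
  have hcomm : Commute (↑u : Module.End ℂ V) (m - 1) := by
    rw [hu]; exact (Commute.refl m).sub_right (Commute.one_right m)
  have hcomm' : Commute m' (m - 1) := hcomm.units_inv_left
  have hm'm : m' * m = 1 := by rw [hm'def, ← hu]; exact u.inv_mul
  have hm'nil : ((m' - 1 : Module.End ℂ V)) ^ d = 0 := by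
    have h1 : m' - 1 = -(m' * (m - 1)) := by
      rw [mul_sub, mul_one, hm'm, neg_sub]
    rw [h1, neg_pow, hcomm'.mul_pow, hm1, mul_zero, mul_zero]
  set h : ℂ → V := fun z => f z⁻¹ with hh
  have hfh : ∀ z : ℂ, z ≠ 0 → DifferentiableAt ℂ h z := fun z hz =>
    (hf z⁻¹ (inv_ne_zero hz)).comp z (differentiableAt_inv hz)
  have hqh : ∀ z : ℂ, z ≠ 0 → h (q * z) = m' (h z) := by
    intro z hz
    have hz' : q⁻¹ * z⁻¹ ≠ 0 := mul_ne_zero (inv_ne_zero hq) (inv_ne_zero hz)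
    have h1 := hqf (q⁻¹ * z⁻¹) hz'
    rw [← mul_assoc, mul_inv_cancel₀ hq, one_mul] at h1
    have h2 : h (q * z) = f (q⁻¹ * z⁻¹) := by
      show f (q * z)⁻¹ = f (q⁻¹ * z⁻¹)
      rw [mul_inv]
    rw [h2, hh]
    show f (q⁻¹ * z⁻¹) = m' (f z⁻¹)
    rw [h1, ← Module.End.mul_apply, hm'm, Module.End.one_apply]
  obtain ⟨g, hg, hgf⟩ := ext_at_zero q hq0 hq1 m d hm1 f hf hqf
  obtain ⟨g', hg', hg'h⟩ := ext_at_zero q hq0 hq1 m' d hm'nil h hfh hqh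
  obtain ⟨C1, hC1⟩ := (isCompact_closedBall (0 : ℂ) 1).exists_bound_of_continuousOn
    hg.continuous.continuousOn
  obtain ⟨C2, hC2⟩ := (isCompact_closedBall (0 : ℂ) 1).exists_bound_of_continuousOn
    hg'.continuous.continuousOn
  have hbdd : ∀ z : ℂ, ‖g z‖ ≤ max C1 C2 := by
    intro z
    rcases le_or_gt (‖z‖) 1 with h1 | h1
    · exact le_trans (hC1 z (by
        simpa [Metric.mem_closedBall, Complex.dist_eq, sub_zero] using h1)) (le_max_left _ _)
    · have hz0 : z ≠ 0 := by intro hz; rw [hz] at h1; simp at h1; exact absurd h1 (by norm_num)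
      have hzinv : z⁻¹ ≠ 0 := inv_ne_zero hz0
      have hgz : g z = g' z⁻¹ := by
        rw [hgf z hz0, hg'h z⁻¹ hzinv]
        show f z = f z⁻¹⁻¹
        rw [inv_inv]
      rw [hgz]
      refine le_trans (hC2 z⁻¹ ?_) (le_max_right _ _)
      have : ‖z⁻¹‖ ≤ 1 := by
        rw [norm_inv]
        exact inv_le_one_of_one_le₀ h1.le
      simpa [Metric.mem_closedBall, Complex.dist_eq, sub_zero] using this
  have hrange : Bornology.IsBounded (Set.range g) := by
    rw [isBounded_iff_forall_norm_le]
    exact ⟨max C1 C2, by rintro x ⟨z, rfl⟩; exact hbdd z⟩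
  refine ⟨f 1, ?_, fun z hz => ?_⟩
  · have h1 : f (q * 1) = m (f 1) := hqf 1 one_ne_zero
    rw [mul_one] at h1
    have h2 : f q = f 1 := by
      rw [← hgf q hq, ← hgf 1 one_ne_zero]
      exact hg.apply_eq_apply_of_bounded hrange q 1
    rw [← h1, h2]
  · rw [← hgf z hz, ← hgf 1 one_ne_zero]
    exact hg.apply_eq_apply_of_bounded hrange z 1
end

section
/- Let q ∈ ℂ with 0 < |q| < 1 and let c ∈ ℂ. If f : ℂ ∖ {0} → ℂ is holomorphic and satisfies f(q·z) = f(z) + c for all z ≠ 0, then c = 0 and f is constant. -/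
open Set Filter Bornology Function Topology

/-- A `q`-invariant bounded-type holomorphic function on `ℂ ∖ {0}` is constant. -/
lemma invariant_const (q : ℂ) (hq0 : 0 < ‖q‖) (hq1 : ‖q‖ < 1)
    (h : ℂ → ℂ) (hd : ∀ z : ℂ, z ≠ 0 → DifferentiableAt ℂ h z)
    (hinv : ∀ z : ℂ, z ≠ 0 → h (q * z) = h z) :
    ∀ z : ℂ, z ≠ 0 → h z = h 1 := by
  have hqne : q ≠ 0 := fun hq => by simp [hq] at hq0
  -- invariance under natural powers
  have hpow : ∀ (k : ℕ) (w : ℂ), w ≠ 0 → h (q ^ k * w) = h w := by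
    intro k
    induction k with
    | zero => intro w hw; simp
    | succ n ih =>
      intro w hw
      have : q ^ (n + 1) * w = q * (q ^ n * w) := by ring
      rw [this, hinv _ (mul_ne_zero (pow_ne_zero _ hqne) hw), ih w hw]
  -- the fundamental compact annulus
  set S : Set ℂ := (norm : ℂ → ℝ) ⁻¹' Icc 1 (‖q‖)⁻¹ with hS
  have hScompact : IsCompact S := by
    rw [Metric.isCompact_iff_isClosed_bounded]
    constructor
    · exact isClosed_Icc.preimage continuous_norm
    · apply (Metric.isBounded_iff_subset_closedBall 0).2
      exact ⟨(‖q‖)⁻¹, fun w hw => by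
        simpa [Complex.dist_eq] using hw.2⟩
  have hScont : ContinuousOn h S := by
    intro w hw
    have hw1 : (1 : ℝ) ≤ ‖w‖ := hw.1
    have : w ≠ 0 := by
      intro h0; rw [h0] at hw1; simp at hw1; linarith
    exact (hd w this).continuousAt.continuousWithinAt
  obtain ⟨M, hM⟩ := hScompact.exists_bound_of_continuousOn hScont
  -- every nonzero z has the same value as a point of S
  have hreach : ∀ z : ℂ, z ≠ 0 → ∃ w ∈ S, h z = h w := by
    intro z hz
    have hza : 0 < ‖z‖ := norm_pos_iff.mpr hz
    have hy : 1 < (‖q‖)⁻¹ := (one_lt_inv₀ hq0).2 hq1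
    obtain ⟨n, hn1, hn2⟩ := exists_mem_Ico_zpow hza hy
    refine ⟨q ^ n * z, ?_, ?_⟩
    · have haq : ‖q ^ n * z‖ = (‖q‖) ^ n * ‖z‖ := by
        simp [map_zpow₀]
      constructor
      · rw [haq]
        have : ((‖q‖)⁻¹) ^ n ≤ ‖z‖ := hn1
        rw [inv_zpow] at this
        calc (1:ℝ) = (‖q‖) ^ n * ((‖q‖) ^ n)⁻¹ := by
              rw [mul_inv_cancel₀ (zpow_ne_zero n (ne_of_gt hq0))]
          _ ≤ (‖q‖) ^ n * ‖z‖ := by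
              apply mul_le_mul_of_nonneg_left this (le_of_lt (by positivity))
      · rw [haq]
        have : ‖z‖ < ((‖q‖)⁻¹) ^ (n + 1) := hn2
        rw [inv_zpow] at this
        have h2 : (‖q‖) ^ n * ‖z‖
            < (‖q‖) ^ n * ((‖q‖) ^ (n + 1))⁻¹ := by
          apply mul_lt_mul_of_pos_left this (by positivity)
        calc (‖q‖) ^ n * ‖z‖
            ≤ (‖q‖) ^ n * ((‖q‖) ^ (n + 1))⁻¹ := le_of_lt h2
          _ = (‖q‖)⁻¹ := by
              rw [← zpow_neg, ← zpow_add₀ (ne_of_gt hq0)]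
              rw [← zpow_neg_one]
              congr 1
              ring
    · rcases le_or_gt 0 n with hn | hn
      · have : q ^ n = q ^ n.toNat := by
          rw [← zpow_natCast, Int.toNat_of_nonneg hn]
        rw [this, hpow n.toNat z hz]
      · have hmn : 0 ≤ -n := by omega
        have hzw : z = q ^ (-n).toNat * (q ^ n * z) := by
          rw [← zpow_natCast, Int.toNat_of_nonneg hmn, ← mul_assoc,
            ← zpow_add₀ hqne]
          simp
        conv_lhs => rw [hzw]
        rw [hpow _ _ (by
          apply mul_ne_zero (zpow_ne_zero n hqne) hz)]
  have hbd : ∀ z : ℂ, z ≠ 0 → ‖h z‖ ≤ M := by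
    intro z hz
    obtain ⟨w, hwS, hw⟩ := hreach z hz
    rw [hw]; exact hM w hwS
  -- removable singularity at 0
  set H : ℂ → ℂ := update h 0 (limUnder (𝓝[≠] (0:ℂ)) h) with hH
  have hHd : Differentiable ℂ H := by
    rw [← differentiableOn_univ]
    apply Complex.differentiableOn_update_limUnder_of_bddAbove univ_mem
    · intro z hz
      exact (hd z hz.2).differentiableWithinAt
    · refine ⟨M, ?_⟩
      rintro x ⟨z, hz, rfl⟩
      exact hbd z hz.2
  have hHb : IsBounded (range H) := by
    apply (isBounded_iff_forall_norm_le).2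
    refine ⟨max M ‖H 0‖, ?_⟩
    rintro x ⟨z, rfl⟩
    rcases eq_or_ne z 0 with rfl | hz
    · exact le_max_right _ _
    · rw [hH, update_of_ne hz]
      exact le_trans (hbd z hz) (le_max_left _ _)
  intro z hz
  have := hHd.apply_eq_apply_of_bounded hHb z 1
  rwa [hH, update_of_ne hz, update_of_ne one_ne_zero] at this

/-- Let `q ∈ ℂ` with `0 < |q| < 1` and `c ∈ ℂ`.  If `f` is
holomorphic on `ℂ ∖ {0}` and satisfies `f (q * z) = f z + c` for all `z ≠ 0`,
then `c = 0` and `f` is constant on `ℂ ∖ {0}`. -/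
theorem stmt1 (q : ℂ) (hq0 : 0 < ‖q‖) (hq1 : ‖q‖ < 1)
    (c : ℂ) (f : ℂ → ℂ)
    (hf : ∀ z : ℂ, z ≠ 0 → DifferentiableAt ℂ f z)
    (hqf : ∀ z : ℂ, z ≠ 0 → f (q * z) = f z + c) :
    c = 0 ∧ ∃ v : ℂ, ∀ z : ℂ, z ≠ 0 → f z = v := by
  have hqne : q ≠ 0 := fun hq => by simp [hq] at hq0
  -- f is analytic on ℂ ∖ {0}, hence so is its derivative
  have hfa : AnalyticOnNhd ℂ f {(0:ℂ)}ᶜ := by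
    apply DifferentiableOn.analyticOnNhd (fun z hz => (hf z hz).differentiableWithinAt)
      isOpen_compl_singleton
  have hd' : ∀ z : ℂ, z ≠ 0 → DifferentiableAt ℂ (deriv f) z := fun z hz =>
    (hfa.deriv z hz).differentiableAt
  -- the functional equation for the derivative
  have hderiv : ∀ z : ℂ, z ≠ 0 → deriv f (q * z) * q = deriv f z := by
    intro z hz
    have h1 : HasDerivAt (fun w => f (q * w)) (deriv f (q * z) * q) z := by
      have hg : HasDerivAt (fun w : ℂ => q * w) q z := by
        simpa using (hasDerivAt_id z).const_mul q
      exact ((hf (q * z) (mul_ne_zero hqne hz)).hasDerivAt.comp z hg :)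
    have h2 : HasDerivAt (fun w => f w + c) (deriv f (q * z) * q) z := by
      apply h1.congr_of_eventuallyEq
      filter_upwards [compl_singleton_mem_nhds hz] with w hw
      exact (hqf w hw).symm
    have h3 : HasDerivAt (fun w => f w + c) (deriv f z) z :=
      (hf z hz).hasDerivAt.add_const c
    exact h2.unique h3
  -- z * f'(z) is invariant, hence constant
  set h : ℂ → ℂ := fun z => z * deriv f z with hh
  have hinv : ∀ z : ℂ, z ≠ 0 → h (q * z) = h z := by
    intro z hz
    show q * z * deriv f (q * z) = z * deriv f z
    rw [← hderiv z hz]; ring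
  have hhd : ∀ z : ℂ, z ≠ 0 → DifferentiableAt ℂ h z := fun z hz =>
    (differentiableAt_id.mul (hd' z hz))
  have hconst := invariant_const q hq0 hq1 h hhd hinv
  set a : ℂ := h 1 with ha
  have hza : ∀ z : ℂ, z ≠ 0 → z * deriv f z = a := fun z hz => hconst z hz
  -- derivative of f along a logarithmic path
  have key : ∀ b : ℂ, ∀ θ : ℝ,
      HasDerivAt (fun t : ℝ => f (Complex.exp (t * b))) (b * a) θ := by
    intro b θ
    have hE : HasDerivAt (fun w : ℂ => Complex.exp (w * b)) (Complex.exp (θ * b) * b) θ := by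
      simpa [mul_comm, Function.comp_def] using ((Complex.hasDerivAt_exp (↑θ * b)).comp (↑θ : ℂ)
        ((hasDerivAt_id (↑θ : ℂ)).mul_const b) :)
    have hEr : HasDerivAt (fun t : ℝ => Complex.exp (↑t * b)) (Complex.exp (↑θ * b) * b) θ :=
      hE.comp_ofReal
    have hne : Complex.exp (↑θ * b) ≠ 0 := Complex.exp_ne_zero _
    have := ((hf _ hne).hasDerivAt.comp θ hEr :)
    have h4 : deriv f (Complex.exp (↑θ * b)) * (Complex.exp (↑θ * b) * b) = b * a := by
      rw [show deriv f (Complex.exp (↑θ * b)) * (Complex.exp (↑θ * b) * b)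
          = b * (Complex.exp (↑θ * b) * deriv f (Complex.exp (↑θ * b))) by ring,
        hza _ hne]
    rwa [h4] at this
  -- hence f ∘ exp(t b) is affine with slope b a; closing the unit circle gives a = 0
  have haffine : ∀ b : ℂ, ∀ θ : ℝ,
      f (Complex.exp (θ * b)) - b * a * θ = f (Complex.exp ((0:ℝ) * b)) := by
    intro b θ
    set ψ : ℝ → ℂ := fun t : ℝ => f (Complex.exp (t * b)) - b * a * t with hψ
    have hψd : ∀ t : ℝ, HasDerivAt ψ 0 t := by
      intro t
      have h1 : HasDerivAt (fun s : ℝ => b * a * (s : ℂ)) (b * a) t := by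
        simpa using ((hasDerivAt_id (t:ℂ)).const_mul (b*a)).comp_ofReal
      have h5 := (key b t).sub h1
      rw [sub_self] at h5
      exact h5
    have hc : ψ θ = ψ 0 := by
      apply is_const_of_deriv_eq_zero (fun t => (hψd t).differentiableAt)
        (fun t => (hψd t).deriv)
    simpa [hψ] using hc
  -- a = 0 from the closed circle path
  have ha0 : a = 0 := by
    have h2π := haffine Complex.I (2 * Real.pi)
    have he : Complex.exp ((2 * Real.pi : ℝ) * Complex.I) = Complex.exp ((0:ℝ) * Complex.I) := by
      push_cast
      rw [Complex.exp_two_pi_mul_I]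
      simp
    rw [he, sub_eq_self] at h2π
    have hIa : Complex.I * a = 0 := by
      rcases mul_eq_zero.1 h2π with h | h
      · exact h
      · exfalso
        have hne : (2 * Real.pi : ℝ) ≠ 0 := by positivity
        exact hne (by exact_mod_cast h)
    simpa [Complex.I_ne_zero] using mul_eq_zero.1 hIa
  -- c = 0 from the path from 1 to q
  have hc0 : c = 0 := by
    have h1 := haffine (Complex.log q) 1
    rw [ha0, mul_zero, zero_mul, sub_zero] at h1
    rw [show ((1:ℝ):ℂ) * Complex.log q = Complex.log q by simp,
      show ((0:ℝ):ℂ) * Complex.log q = 0 by simp, Complex.exp_log hqne,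
      Complex.exp_zero] at h1
    have := hqf 1 one_ne_zero
    rw [mul_one, h1] at this
    linear_combination -this
  refine ⟨hc0, f 1, ?_⟩
  exact invariant_const q hq0 hq1 f hf (fun z hz => by rw [hqf z hz, hc0, add_zero])
end

section
/- Let R be a commutative ring, let L be a Lie algebra over R, let D : L → L be a derivation of L (an R-linear map with D⁅x,y⁆ = ⁅D x, y⁆ + ⁅x, D y⁆), and let t, B ∈ L. Then for every n ∈ ℕ: D((ad t)^n B) = Σ_{k=1}^{n} (n choose k) · ⁅(ad t)^{k−1}(D t), (ad t)^{n−k} B⁆ + (ad t)^n (D B), where ad t denotes the adjoint map x ↦ ⁅t, x⁆ and (n choose k) acts by the natural ℕ-scalar multiplication. -/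
/-!
In the associative algebra `Module.End R L`, left multiplication by `a` is the sum of the commuting
operators `ad a` and right multiplication by `a`, so `a ^ n * b = ∑ (n choose k) ((ad a) ^ k b) a ^ (n - k)`.
For `a = ad t` and `b = D`, the derivation property reads `⁅ad t, D⁆ = -ad (D t)`, and since `ad` is a
morphism of Lie algebras, `(ad (ad t)) ^ (k + 1) D = -ad ((ad t) ^ k (D t))`.
-/

open Finset LieAlgebra

attribute [local instance] LieRing.ofAssociativeRing

theorem pow_mul_eq_sum_ad_pow_mul {R A : Type*} [CommRing R] [Ring A] [Algebra R A]
    (a b : A) (n : ℕ) :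
    a ^ n * b = ∑ k ∈ range (n + 1), n.choose k • ((ad R A a ^ k) b * a ^ (n - k)) := by
  have hsplit : LinearMap.mulLeft R a = ad R A a + LinearMap.mulRight R a := by
    rw [ad_eq_lmul_left_sub_lmul_right, Pi.sub_apply, sub_add_cancel]
  have hcomm : Commute (ad R A a) (LinearMap.mulRight R a) := by
    rw [ad_eq_lmul_left_sub_lmul_right, Pi.sub_apply]
    exact (LinearMap.commute_mulLeft_right a a).sub_left (Commute.refl _)
  calc a ^ n * b = (LinearMap.mulLeft R a ^ n) b := by simp
    _ = _ := by
      rw [hsplit, hcomm.add_pow, LinearMap.sum_apply]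
      refine sum_congr rfl fun k _ => ?_
      rw [(hcomm.pow_pow k (n - k)).eq]
      simp only [Module.End.mul_apply, Module.End.natCast_apply, map_nsmul,
        LinearMap.pow_mulRight, LinearMap.mulRight_apply]

section

variable {R L : Type*} [CommRing R] [LieRing L] [LieAlgebra R L]

theorem LieHom.ad_pow_apply_map {L' : Type*} [LieRing L'] [LieAlgebra R L'] (f : L →ₗ⁅R⁆ L')
    (x y : L) (k : ℕ) : (ad R L' (f x) ^ k) (f y) = f ((ad R L x ^ k) y) := by
  induction k with
  | zero => rfl
  | succ k ih =>
    simp only [pow_succ', Module.End.mul_apply, ih, ad_apply, LieHom.map_lie]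

theorem lie_ad_eq_neg_ad_of_leibniz (D : Module.End R L)
    (hD : ∀ x y : L, D ⁅x, y⁆ = ⁅D x, y⁆ + ⁅x, D y⁆) (t : L) :
    ⁅ad R L t, D⁆ = -ad R L (D t) := by
  ext x
  simp [Ring.lie_def, hD]

theorem ad_pow_mul_eq_mul_ad_pow_sub_sum (D : Module.End R L)
    (hD : ∀ x y : L, D ⁅x, y⁆ = ⁅D x, y⁆ + ⁅x, D y⁆) (t : L) (n : ℕ) :
    ad R L t ^ n * D = D * ad R L t ^ n -
      ∑ k ∈ range n,
        n.choose (k + 1) • (ad R L ((ad R L t ^ k) (D t)) * ad R L t ^ (n - (k + 1))) := by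
  have hiter (k : ℕ) :
      (ad R (Module.End R L) (ad R L t) ^ (k + 1)) D = -ad R L ((ad R L t ^ k) (D t)) := by
    rw [pow_succ, Module.End.mul_apply, ad_apply, lie_ad_eq_neg_ad_of_leibniz D hD, map_neg,
      LieHom.ad_pow_apply_map]
  rw [pow_mul_eq_sum_ad_pow_mul (R := R), sum_range_succ']
  simp only [hiter, neg_mul, smul_neg, sum_neg_distrib, Nat.choose_zero_right, pow_zero,
    Module.End.one_apply, one_smul, Nat.sub_zero]
  abel

end

/-- (Lemma 3.1.4 in monomial form.)  For a derivation `D` of a Lie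
algebra `L` over a commutative ring `R`, and `t B : L`, for every `n`:
`D((ad t)^n B) = ∑_{k=1}^{n} (n choose k) • ⁅(ad t)^{k-1}(D t), (ad t)^{n-k} B⁆
                 + (ad t)^n (D B)`. -/
theorem stmt4 {R : Type*} {L : Type*} [CommRing R] [LieRing L] [LieAlgebra R L]
    (D : L →ₗ[R] L) (hD : ∀ x y : L, D ⁅x, y⁆ = ⁅D x, y⁆ + ⁅x, D y⁆)
    (t B : L) (n : ℕ) :
    D (((LieAlgebra.ad R L t) ^ n) B) =
      (∑ k ∈ Finset.Icc 1 n,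
        (n.choose k) • ⁅((LieAlgebra.ad R L t) ^ (k - 1)) (D t),
                        ((LieAlgebra.ad R L t) ^ (n - k)) B⁆) +
      ((LieAlgebra.ad R L t) ^ n) (D B) := by
  have h := congrArg (· B) (ad_pow_mul_eq_mul_ad_pow_sub_sum D hD t n)
  simp only [Module.End.mul_apply, LinearMap.sub_apply, LinearMap.sum_apply,
    LinearMap.smul_apply, ad_apply] at h
  rw [← Ico_add_one_right_eq_Icc, sum_Ico_eq_sum_range, h]
  simp only [add_comm 1, Nat.add_sub_cancel]
  abel
end

section
/- Let A be an associative (not necessarily commutative) algebra over ℚ, let D : A → A be a derivation (a ℚ-linear map with D(xy) = D(x)y + xD(y)), and let t ∈ A be nilpotent with t^N = 0. Define ad_t : A → A by ad_t(x) = t·x − x·t, so that (ad_t)^{2N−1} = 0. Then D(Σ_{j=0}^{N−1} t^j/j!) = (Σ_{j=0}^{N−1} t^j/j!) · (Σ_{k=0}^{2N−2} ((−1)^k/(k+1)!) · (ad_t)^k (D t)). -/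
open Finset

section Helpers

lemma beta_id : ∀ (a : ℕ), ∀ (b : ℕ),
    ∑ i ∈ range (a+1), (-1:ℚ)^i * (a.choose i) / (i+b+1) =
      (a.factorial * b.factorial) / ((a+b+1).factorial) := by
  intro a
  induction a with
  | zero =>
    intro b
    simp [Nat.factorial_succ]
    rw [eq_div_iff (by positivity)]
    field_simp
  | succ a ih =>
    intro b
    rw [Finset.sum_range_succ']
    have h1 : ∀ i ∈ range (a+1), (-1:ℚ)^(i+1) * ((a+1).choose (i+1)) / ((i+1 : ℕ)+(b:ℚ)+1)
        = -((-1:ℚ)^i * (a.choose i) / ((i:ℚ)+(b+1)+1))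
          + (-1:ℚ)^(i+1) * (a.choose (i+1)) / (((i:ℚ)+1)+b+1) := by
      intro i hi
      rw [Nat.choose_succ_succ]
      push_cast
      ring
    rw [Finset.sum_congr rfl h1, Finset.sum_add_distrib]
    have h2 : ∑ i ∈ range (a+1), -((-1:ℚ)^i * (a.choose i) / ((i:ℚ)+(b+1)+1))
        = -((a.factorial * (b+1).factorial) / ((a+b+2).factorial)) := by
      rw [Finset.sum_neg_distrib]
      have := ih (b+1)
      rw [show a+(b+1)+1 = a+b+2 from by omega] at this
      push_cast at this ⊢
      rw [this]
    have h3 : ∑ i ∈ range (a+1), (-1:ℚ)^(i+1) * (a.choose (i+1)) / (((i:ℚ)+1)+b+1)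
        = (a.factorial * b.factorial) / ((a+b+1).factorial) - 1/(b+1) := by
      have hs := Finset.sum_range_succ' (fun i => (-1:ℚ)^i * (a.choose i) / ((i:ℚ)+b+1)) (a+1)
      have hfull : ∑ i ∈ range (a+1+1), (-1:ℚ)^i * (a.choose i) / ((i:ℚ)+b+1)
          = (a.factorial * b.factorial) / ((a+b+1).factorial) := by
        rw [Finset.sum_range_succ, ih b, Nat.choose_succ_self]
        simp
      rw [hfull] at hs
      push_cast at hs ⊢
      simp at hs
      rw [one_div]
      linarith [hs]
    rw [h2, h3]
    have e1 : ((a+1+b+1).factorial : ℚ) = (a+b+2) * (a+b+1).factorial := by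
      have : a+1+b+1 = (a+b+1)+1 := by ring
      rw [this, Nat.factorial_succ]; push_cast; ring
    have e2 : ((a+b+2).factorial : ℚ) = (a+b+2) * (a+b+1).factorial := by
      have : a+b+2 = (a+b+1)+1 := by ring
      rw [this, Nat.factorial_succ]; push_cast; ring
    have e3 : (((a+1).factorial : ℚ)) = (a+1) * a.factorial := by
      rw [Nat.factorial_succ]; push_cast; ring
    have e4 : (((b+1).factorial : ℚ)) = (b+1) * b.factorial := by
      rw [Nat.factorial_succ]; push_cast; ring
    push_cast [e1, e2, e3, e4]
    have hb : ((b:ℚ)+1) ≠ 0 := by positivity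
    have hf1 : ((a+b+1).factorial : ℚ) ≠ 0 := by positivity
    have hf2 : ((a:ℚ)+b+2) ≠ 0 := by positivity
    field_simp
    simp only [Nat.choose_zero_right, Nat.cast_one]
    ring

lemma coeff_id (a b : ℕ) :
    ∑ i ∈ range (a+1), ((-1:ℚ)^i * ((i+b).choose i)) / ((a-i).factorial * (i+b+1).factorial)
      = 1/((a+b+1).factorial) := by
  have hterm : ∀ i ∈ range (a+1),
      ((-1:ℚ)^i * ((i+b).choose i)) / ((a-i).factorial * (i+b+1).factorial)
        = ((-1:ℚ)^i * (a.choose i) / ((i:ℚ)+b+1)) / (a.factorial * b.factorial) := by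
    intro i hi
    have hia : i ≤ a := by simpa using Nat.lt_succ_iff.mp (mem_range.mp hi)
    have h1 : (a.choose i : ℚ) * i.factorial * (a-i).factorial = a.factorial := by
      exact_mod_cast congrArg (Nat.cast (R := ℚ)) (Nat.choose_mul_factorial_mul_factorial hia)
    have h2 : ((i+b).choose i : ℚ) * i.factorial * b.factorial = (i+b).factorial := by
      have := Nat.choose_mul_factorial_mul_factorial (Nat.le_add_right i b)
      rw [Nat.add_sub_cancel_left] at this
      exact_mod_cast congrArg (Nat.cast (R := ℚ)) this
    have h3 : ((i+b+1).factorial : ℚ) = ((i:ℚ)+b+1) * (i+b).factorial := by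
      rw [Nat.factorial_succ]; push_cast; ring
    have hi0 : (i.factorial : ℚ) ≠ 0 := by positivity
    have hai0 : ((a-i).factorial : ℚ) ≠ 0 := by positivity
    have hb0 : (b.factorial : ℚ) ≠ 0 := by positivity
    have hib0 : ((i+b).factorial : ℚ) ≠ 0 := by positivity
    have hibs : ((i:ℚ)+b+1) ≠ 0 := by positivity
    have ha0 : (a.factorial : ℚ) ≠ 0 := by positivity
    rw [h3]
    field_simp
    linear_combination (-1:ℚ) *
      ((((i+b).choose i : ℚ) * (b.factorial : ℚ)) * h1 -
       ((a.choose i : ℚ) * ((a-i).factorial : ℚ)) * h2)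
  rw [Finset.sum_congr rfl hterm, ← Finset.sum_div, beta_id a b]
  have ha0 : (a.factorial : ℚ) ≠ 0 := by positivity
  have hb0 : (b.factorial : ℚ) ≠ 0 := by positivity
  have h0 : ((a+b+1).factorial : ℚ) ≠ 0 := by positivity
  field_simp

lemma tri_sum {β : Type*} [AddCommMonoid β] (n : ℕ) (f : ℕ → ℕ → β) :
    ∑ k ∈ range n, ∑ i ∈ range (k+1), f k i
      = ∑ p ∈ (range n ×ˢ range n).filter (fun p => p.2 ≤ p.1), f p.1 p.2 := by
  rw [Finset.sum_filter, Finset.sum_product]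
  refine Finset.sum_congr rfl (fun k hk => ?_)
  have hkn : k + 1 ≤ n := mem_range.mp hk
  rw [← Finset.sum_subset (Finset.range_subset_range.mpr hkn)
    (fun i _ hi => by rw [if_neg]; exact fun h => hi (mem_range.mpr (by omega)))]
  exact (Finset.sum_congr rfl fun i hi => by
    rw [if_pos (Nat.lt_succ_iff.mp (mem_range.mp hi))]).symm

variable {A : Type*} [Ring A] [Algebra ℚ A]

lemma choose_sign_id (k i : ℕ) (hik : i ≤ k) :
    ((-1:ℚ)^(k-i)) * (k.choose i) - ((-1:ℚ)^(k-(i+1))) * (k.choose (i+1))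
      = ((-1:ℚ)^(k-i)) * ((k+1).choose (i+1)) := by
  rcases eq_or_lt_of_le hik with h | h
  · subst h
    simp [Nat.choose_succ_self]
  · have h1 : k - i = (k - (i+1)) + 1 := by omega
    rw [Nat.choose_succ_succ, h1]
    push_cast
    ring

lemma ad_iter (t y : A) : ∀ k : ℕ,
    (fun x => t * x - x * t)^[k] y
      = ∑ i ∈ range (k+1), (((-1:ℚ)^(k-i)) * (k.choose i)) • (t^i * y * t^(k-i)) := by
  intro k
  induction k with
  | zero => simp
  | succ k ih =>
    rw [Function.iterate_succ_apply', ih]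
    rw [Finset.mul_sum, Finset.sum_mul]
    have hL : ∀ i ∈ range (k+1),
        t * ((((-1:ℚ)^(k-i)) * (k.choose i)) • (t^i * y * t^(k-i)))
          = (((-1:ℚ)^(k-i)) * (k.choose i)) • (t^(i+1) * y * t^(k-i)) := by
      intro i hi
      rw [mul_smul_comm]
      congr 1
      rw [← mul_assoc, ← mul_assoc, ← pow_succ']
    have hR : ∀ i ∈ range (k+1),
        ((((-1:ℚ)^(k-i)) * (k.choose i)) • (t^i * y * t^(k-i))) * t
          = (((-1:ℚ)^(k-i)) * (k.choose i)) • (t^i * y * t^(k+1-i)) := by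
      intro i hi
      have hik : i ≤ k := Nat.lt_succ_iff.mp (mem_range.mp hi)
      rw [smul_mul_assoc]
      congr 1
      rw [mul_assoc, ← pow_succ]
      congr 2
      omega
    rw [Finset.sum_congr rfl hL, Finset.sum_congr rfl hR]
    -- expand the RHS sum: split off i = 0
    rw [Finset.sum_range_succ' (fun i => (((-1:ℚ)^(k+1-i)) * ((k+1).choose i)) • (t^i * y * t^(k+1-i))) (k+1)]
    -- and split off i = 0 of the subtracted sum
    rw [Finset.sum_range_succ' (fun i => (((-1:ℚ)^(k-i)) * ((k.choose i) : ℚ)) • (t^i * y * t^(k+1-i))) k]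
    have hz : ∑ i ∈ range (k+1), (((-1:ℚ)^(k-(i+1))) * ((k.choose (i+1)) : ℚ)) • (t^(i+1) * y * t^(k+1-(i+1)))
        = ∑ i ∈ range k, (((-1:ℚ)^(k-(i+1))) * ((k.choose (i+1)) : ℚ)) • (t^(i+1) * y * t^(k+1-(i+1))) := by
      rw [Finset.sum_range_succ, Nat.choose_succ_self]
      simp
    rw [← hz, sub_add_eq_sub_sub, ← Finset.sum_sub_distrib]
    have key : ∀ i ∈ range (k+1),
        (((-1:ℚ)^(k-i)) * ((k.choose i) : ℚ)) • (t^(i+1) * y * t^(k-i))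
          - (((-1:ℚ)^(k-(i+1))) * ((k.choose (i+1)) : ℚ)) • (t^(i+1) * y * t^(k+1-(i+1)))
        = (((-1:ℚ)^(k+1-(i+1))) * (((k+1).choose (i+1)) : ℚ)) • (t^(i+1) * y * t^(k+1-(i+1))) := by
      intro i hi
      have hik : i ≤ k := Nat.lt_succ_iff.mp (mem_range.mp hi)
      have h' : k+1-(i+1) = k-i := by omega
      rw [h', ← sub_smul, choose_sign_id k i hik]
    rw [Finset.sum_congr rfl key, sub_eq_add_neg]
    congr 1
    rw [← neg_smul]
    congr 1
    simp [pow_succ]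

lemma D_one (D : A →ₗ[ℚ] A) (hD : ∀ x y : A, D (x * y) = D x * y + x * D y) : D 1 = 0 := by
  have := hD 1 1
  simp at this
  exact this

lemma dpow (D : A →ₗ[ℚ] A) (hD : ∀ x y : A, D (x * y) = D x * y + x * D y) (t : A) :
    ∀ n : ℕ, D (t^n) = ∑ a ∈ range n, t^a * D t * t^(n-1-a) := by
  intro n
  induction n with
  | zero => simpa using D_one D hD
  | succ n ih =>
    rw [pow_succ', hD t (t^n), ih, Finset.mul_sum]
    rw [Finset.sum_range_succ' (fun a => t^a * D t * t^(n+1-1-a)) n]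
    have h1 : ∀ a ∈ range n, t * (t^a * D t * t^(n-1-a)) = t^(a+1) * D t * t^(n+1-1-(a+1)) := by
      intro a ha
      have : n+1-1-(a+1) = n-1-a := by omega
      rw [this, ← mul_assoc, ← mul_assoc, ← pow_succ']
    rw [Finset.sum_congr rfl h1]
    simp [add_comm]

end Helpers

/-- (Lemma 3.1.5.)  Let `A` be an associative `ℚ`-algebra,
`D : A → A` a derivation and `t ∈ A` nilpotent with `t^N = 0`; let
`ad_t x = t*x - x*t` (so that `ad_t^(2N-1) = 0`).  Then
`D(exp t) = exp(t) * ((exp(-ad_t) - 1)/(-ad_t))(D t)`, where `exp t = ∑_{j<N} t^j/j!`,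
i.e. `D(∑_{j<N} t^j/j!) = (∑_{j<N} t^j/j!) * ∑_{k≤2N-2} ((-1)^k/(k+1)!) • ad_t^[k] (D t)`. -/
theorem stmt5 {A : Type*} [Ring A] [Algebra ℚ A]
    (D : A →ₗ[ℚ] A) (hD : ∀ x y : A, D (x * y) = D x * y + x * D y)
    (t : A) (N : ℕ) (hN : t ^ N = 0) :
    D (∑ j ∈ Finset.range N, ((j.factorial : ℚ)⁻¹) • t ^ j) =
      (∑ j ∈ Finset.range N, ((j.factorial : ℚ)⁻¹) • t ^ j) *
        (∑ k ∈ Finset.range (2 * N - 1),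
          (((-1 : ℚ) ^ k / ((k + 1).factorial : ℚ)) •
            ((fun x => t * x - x * t)^[k] (D t)))) := by
  rcases Nat.eq_zero_or_pos N with rfl | hNpos
  · simp
  set M := 2*N-1 with hM
  set T := D t with hT
  have hpowzero : ∀ a, N ≤ a → t^a = (0:A) := fun a ha => by
    calc t^a = t^N * t^(a-N) := by rw [← pow_add]; congr 1; omega
    _ = 0 := by rw [hN, zero_mul]
  set βc : ℕ → ℕ → ℕ → ℚ := fun j k i =>
    (j.factorial:ℚ)⁻¹ * ((-1)^k / (((k+1).factorial : ℚ))) * ((-1)^(k-i) * (k.choose i)) with hβc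
  -- the common middle object
  set G : A := ∑ m ∈ range M, (((m+1).factorial:ℚ))⁻¹ • D (t^(m+1)) with hG
  -- LHS = G
  have hL : D (∑ j ∈ Finset.range N, ((j.factorial : ℚ)⁻¹) • t ^ j) = G := by
    rw [map_sum]
    have h1 : ∀ j ∈ range N, D (((j.factorial : ℚ)⁻¹) • t ^ j)
        = ((j.factorial : ℚ)⁻¹) • D (t ^ j) := fun j _ => map_smul D _ _
    rw [Finset.sum_congr rfl h1]
    have h2 : ∑ j ∈ range N, ((j.factorial : ℚ)⁻¹) • D (t ^ j)
        = ∑ j ∈ range (M+1), ((j.factorial : ℚ)⁻¹) • D (t ^ j) := by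
      refine Finset.sum_subset (Finset.range_subset_range.mpr (by omega)) ?_
      intro j _ hj
      have : t^j = 0 := hpowzero j (by simp at hj; omega)
      rw [this, map_zero, smul_zero]
    rw [h2, Finset.sum_range_succ', hG]
    simp [D_one D hD]
  -- RHS = G
  have hR : (∑ j ∈ Finset.range N, ((j.factorial : ℚ)⁻¹) • t ^ j) *
        (∑ k ∈ Finset.range M,
          (((-1 : ℚ) ^ k / ((k + 1).factorial : ℚ)) •
            ((fun x => t * x - x * t)^[k] T))) = G := by
    have R1 : (∑ j ∈ Finset.range N, ((j.factorial : ℚ)⁻¹) • t ^ j) *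
        (∑ k ∈ Finset.range M,
          (((-1 : ℚ) ^ k / ((k + 1).factorial : ℚ)) •
            ((fun x => t * x - x * t)^[k] T)))
        = ∑ j ∈ range N, ∑ k ∈ range M, ∑ i ∈ range (k+1),
            βc j k i • (t^(j+i) * T * t^(k-i)) := by
      rw [Finset.sum_mul_sum]
      refine Finset.sum_congr rfl fun j _ => Finset.sum_congr rfl fun k _ => ?_
      rw [ad_iter t T k, smul_mul_smul_comm, Finset.mul_sum, Finset.smul_sum]
      refine Finset.sum_congr rfl fun i _ => ?_
      rw [mul_smul_comm, smul_smul]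
      congr 1
      rw [← mul_assoc, ← mul_assoc, ← pow_add]
    have R2 : ∑ j ∈ range N, ∑ k ∈ range M, ∑ i ∈ range (k+1),
            βc j k i • (t^(j+i) * T * t^(k-i))
        = ∑ x ∈ ((range N) ×ˢ (((range M) ×ˢ (range M)).filter (fun p => p.2 ≤ p.1))),
            βc x.1 x.2.1 x.2.2 • (t^(x.1+x.2.2) * T * t^(x.2.1-x.2.2)) := by
      rw [Finset.sum_product]
      exact Finset.sum_congr rfl fun j _ =>
        tri_sum M (fun k i => βc j k i • (t^(j+i) * T * t^(k-i)))
    have R3 : ∑ x ∈ ((range N) ×ˢ (((range M) ×ˢ (range M)).filter (fun p => p.2 ≤ p.1))),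
            βc x.1 x.2.1 x.2.2 • (t^(x.1+x.2.2) * T * t^(x.2.1-x.2.2))
        = ∑ x ∈ (((range N) ×ˢ (((range M) ×ˢ (range M)).filter (fun p => p.2 ≤ p.1))).filter
              (fun x => x.1 + x.2.2 < N ∧ x.2.1 - x.2.2 < N)),
            βc x.1 x.2.1 x.2.2 • (t^(x.1+x.2.2) * T * t^(x.2.1-x.2.2)) := by
      refine (Finset.sum_subset (Finset.filter_subset _ _) ?_).symm
      intro x hx hx'
      have : N ≤ x.1 + x.2.2 ∨ N ≤ x.2.1 - x.2.2 := by
        by_contra h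
        push_neg at h
        exact hx' (Finset.mem_filter.mpr ⟨hx, by omega, by omega⟩)
      rcases this with h | h
      · rw [hpowzero _ h, zero_mul, zero_mul, smul_zero]
      · rw [hpowzero _ h, mul_zero, smul_zero]
    have R4 : ∑ x ∈ (((range N) ×ˢ (((range M) ×ˢ (range M)).filter (fun p => p.2 ≤ p.1))).filter
              (fun x => x.1 + x.2.2 < N ∧ x.2.1 - x.2.2 < N)),
            βc x.1 x.2.1 x.2.2 • (t^(x.1+x.2.2) * T * t^(x.2.1-x.2.2))
        = ∑ y ∈ (((range N) ×ˢ (range N) ×ˢ (range N)).filter (fun y => y.2.2 ≤ y.1)),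
            βc (y.1 - y.2.2) (y.2.2 + y.2.1) y.2.2 • (t^y.1 * T * t^y.2.1) := by
      refine Finset.sum_nbij' (fun x => (x.1 + x.2.2, x.2.1 - x.2.2, x.2.2))
        (fun y => (y.1 - y.2.2, y.2.2 + y.2.1, y.2.2)) ?_ ?_ ?_ ?_ ?_
      · intro x hx
        simp only [Finset.mem_filter, Finset.mem_product, Finset.mem_range] at hx ⊢
        omega
      · intro y hy
        simp only [Finset.mem_filter, Finset.mem_product, Finset.mem_range] at hy ⊢
        omega
      · intro x hx
        simp only [Finset.mem_filter, Finset.mem_product, Finset.mem_range] at hx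
        simp only [Prod.mk.injEq, Prod.ext_iff]
        refine ⟨by omega, by omega, trivial⟩
      · intro y hy
        simp only [Finset.mem_filter, Finset.mem_product, Finset.mem_range] at hy
        simp only [Prod.mk.injEq, Prod.ext_iff]
        refine ⟨by omega, by omega, trivial⟩
      · intro x hx
        simp only [Finset.mem_filter, Finset.mem_product, Finset.mem_range] at hx
        have e1 : x.1 + x.2.2 - x.2.2 = x.1 := by omega
        have e2 : x.2.2 + (x.2.1 - x.2.2) = x.2.1 := by omega
        rw [e1, e2]
    have R5 : ∑ y ∈ (((range N) ×ˢ (range N) ×ˢ (range N)).filter (fun y => y.2.2 ≤ y.1)),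
            βc (y.1 - y.2.2) (y.2.2 + y.2.1) y.2.2 • (t^y.1 * T * t^y.2.1)
        = ∑ a ∈ range N, ∑ b ∈ range N,
            (((a+b+1).factorial : ℚ))⁻¹ • (t^a * T * t^b) := by
      rw [Finset.sum_filter, Finset.sum_product]
      refine Finset.sum_congr rfl fun a ha => ?_
      rw [Finset.sum_product]
      refine Finset.sum_congr rfl fun b hb => ?_
      have haN : a < N := mem_range.mp ha
      -- the inner sum over i
      have h1 : ∑ i ∈ range N,
            (if i ≤ a then βc (a - i) (i + b) i • (t^a * T * t^b) else 0)
          = ∑ i ∈ range (a+1), βc (a - i) (i + b) i • (t^a * T * t^b) := by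
        rw [← Finset.sum_subset (Finset.range_subset_range.mpr haN)
          (fun i _ hi => by rw [if_neg]; exact fun h => hi (mem_range.mpr (by omega)))]
        exact Finset.sum_congr rfl fun i hi => by
          rw [if_pos (Nat.lt_succ_iff.mp (mem_range.mp hi))]
      rw [h1, ← Finset.sum_smul]
      congr 1
      have h2 : ∀ i ∈ range (a+1), βc (a - i) (i + b) i
          = ((-1:ℚ)^i * ((i+b).choose i)) / ((a-i).factorial * (i+b+1).factorial) := by
        intro i hi
        rw [hβc]
        simp only []
        rw [Nat.add_sub_cancel_left]
        have hsign : ((-1:ℚ))^(i+b) * ((-1:ℚ))^b = ((-1:ℚ))^i := by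
          rw [pow_add, mul_assoc, ← pow_add, ← two_mul, pow_mul]
          norm_num
        linear_combination ((((a-i).factorial:ℚ))⁻¹ * ((((i+b+1).factorial):ℚ))⁻¹ *
          (((i+b).choose i : ℚ))) * hsign
      rw [Finset.sum_congr rfl h2, coeff_id a b, one_div]
    have R6 : ∑ a ∈ range N, ∑ b ∈ range N,
            (((a+b+1).factorial : ℚ))⁻¹ • (t^a * T * t^b) = G := by
      rw [hG]
      have h1 : ∀ m ∈ range M, (((m+1).factorial:ℚ))⁻¹ • D (t^(m+1))
          = ∑ a ∈ range (m+1), (((m+1).factorial:ℚ))⁻¹ • (t^a * T * t^(m-a)) := by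
        intro m _
        rw [dpow D hD t (m+1), Finset.smul_sum]
        refine Finset.sum_congr rfl fun a ha => ?_
        congr 2
      rw [Finset.sum_congr rfl h1,
        tri_sum M (fun m a => (((m+1).factorial:ℚ))⁻¹ • (t^a * T * t^(m-a)))]
      have h2 : ∑ p ∈ ((range M ×ˢ range M).filter (fun p => p.2 ≤ p.1)),
            (((p.1+1).factorial:ℚ))⁻¹ • (t^p.2 * T * t^(p.1-p.2))
          = ∑ p ∈ (((range M ×ˢ range M).filter (fun p => p.2 ≤ p.1)).filter
              (fun p => p.2 < N ∧ p.1 - p.2 < N)),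
            (((p.1+1).factorial:ℚ))⁻¹ • (t^p.2 * T * t^(p.1-p.2)) := by
        refine (Finset.sum_subset (Finset.filter_subset _ _) ?_).symm
        intro p hp hp'
        have : N ≤ p.2 ∨ N ≤ p.1 - p.2 := by
          by_contra h
          push_neg at h
          exact hp' (Finset.mem_filter.mpr ⟨hp, by omega, by omega⟩)
        rcases this with h | h
        · rw [hpowzero _ h, zero_mul, zero_mul, smul_zero]
        · rw [hpowzero _ h, mul_zero, smul_zero]
      have hsq : ∑ a ∈ range N, ∑ b ∈ range N, (((a+b+1).factorial : ℚ))⁻¹ • (t^a * T * t^b)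
          = ∑ q ∈ range N ×ˢ range N, (((q.1+q.2+1).factorial : ℚ))⁻¹ • (t^q.1 * T * t^q.2) := by
        rw [Finset.sum_product]
      rw [h2, hsq]
      refine Finset.sum_nbij' (fun q : ℕ × ℕ => (q.1 + q.2, q.1))
        (fun p : ℕ × ℕ => (p.2, p.1 - p.2)) ?_ ?_ ?_ ?_ ?_
      · intro q hq
        simp only [Finset.mem_filter, Finset.mem_product, Finset.mem_range] at hq ⊢
        omega
      · intro p hp
        simp only [Finset.mem_filter, Finset.mem_product, Finset.mem_range] at hp ⊢
        omega
      · intro q hq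
        simp only [Finset.mem_range, Finset.mem_product] at hq
        simp only [Prod.ext_iff]
        refine ⟨trivial, by omega⟩
      · intro p hp
        simp only [Finset.mem_filter, Finset.mem_product, Finset.mem_range] at hp
        simp only [Prod.ext_iff]
        refine ⟨by omega, trivial⟩
      · intro q hq
        have e : q.1 + q.2 - q.1 = q.2 := by omega
        rw [e]
    rw [R1, R2, R3, R4, R5, R6]

  rw [hL, hR]
end

section
/- Let τ ∈ ℂ with ℑτ > 0 and let α ∈ ℂ with θ(α; τ) ≠ 0. Then there is a punctured neighborhood of 0 on which ξ ↦ θ(ξ; τ) is nonvanishing, and the limit as ξ → 0 (ξ ≠ 0) of F(ξ, α; τ) − 1/ξ exists and equals θ′(α; τ)/θ(α; τ), where θ′(α; τ) is the derivative of ξ ↦ θ(ξ; τ) at α. In particular F(·, α; τ) has a simple pole at ξ = 0 with residue 1 and constant Laurent term E₁(α; τ) := θ′(α; τ)/θ(α; τ). -/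
open Complex Metric Filter

/-- The Jacobi theta function
`θ(ξ;τ) = -i·exp(πiτ/4)·(exp(πiξ) - exp(-πiξ))·∏_{j=1}^∞ (1-zq^j)(1-z⁻¹q^j)(1-q^j)`,
where `z = exp(2πiξ)` and `q = exp(2πiτ)`. -/
noncomputable def theta (ξ τ : ℂ) : ℂ :=
  -I * Complex.exp ((Real.pi : ℂ) * I * τ / 4) *
    (Complex.exp ((Real.pi : ℂ) * I * ξ) - Complex.exp (-((Real.pi : ℂ) * I * ξ))) *
    ∏' j : ℕ,
      ((1 - Complex.exp (2 * (Real.pi : ℂ) * I * ξ) *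
            Complex.exp (2 * (Real.pi : ℂ) * I * τ) ^ (j + 1)) *
       ((1 - (Complex.exp (2 * (Real.pi : ℂ) * I * ξ))⁻¹ *
            Complex.exp (2 * (Real.pi : ℂ) * I * τ) ^ (j + 1)) *
        (1 - Complex.exp (2 * (Real.pi : ℂ) * I * τ) ^ (j + 1))))

noncomputable def qc (τ : ℂ) : ℂ := Complex.exp (2 * (Real.pi : ℂ) * I * τ)
noncomputable def zc (ξ : ℂ) : ℂ := Complex.exp (2 * (Real.pi : ℂ) * I * ξ)
noncomputable def fac (τ ξ : ℂ) (j : ℕ) : ℂ :=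
  (1 - zc ξ * qc τ ^ (j + 1)) * ((1 - (zc ξ)⁻¹ * qc τ ^ (j + 1)) * (1 - qc τ ^ (j + 1)))
noncomputable def Pprod (τ ξ : ℂ) : ℂ := ∏' j : ℕ, fac τ ξ j

lemma theta_eq (ξ τ : ℂ) : theta ξ τ =
    -I * Complex.exp ((Real.pi : ℂ) * I * τ / 4) *
    (Complex.exp ((Real.pi : ℂ) * I * ξ) - Complex.exp (-((Real.pi : ℂ) * I * ξ))) *
    Pprod τ ξ := rfl

lemma hq_lt (τ : ℂ) (hτ : 0 < τ.im) : ‖(qc τ)‖ < 1 := by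
  rw [qc, Complex.norm_exp, Real.exp_lt_one_iff]
  have : (2 * (Real.pi : ℂ) * I * τ).re = -(2 * Real.pi * τ.im) := by
    simp [Complex.mul_re, Complex.mul_im]
  rw [this]
  simp only [neg_neg, Left.neg_neg_iff]
  positivity

lemma zc_inv (ξ : ℂ) : (zc ξ)⁻¹ = zc (-ξ) := by
  rw [zc, zc, ← Complex.exp_neg]
  ring_nf

lemma zc_diff : Differentiable ℂ zc := by
  unfold zc
  exact Complex.differentiable_exp.comp ((differentiable_id.const_mul _))

lemma fac_diff (τ : ℂ) (j : ℕ) : Differentiable ℂ (fun ξ => fac τ ξ j) := by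
  unfold fac
  have h1 : Differentiable ℂ (fun ξ : ℂ => (zc ξ)⁻¹) := by
    simp only [zc_inv]
    exact zc_diff.comp differentiable_neg
  have h2 := zc_diff
  fun_prop

lemma abs_zc_le {R : ℝ} (hR : 0 < R) {ξ : ℂ} (hξ : ξ ∈ ball (0:ℂ) R) :
    ‖(zc ξ)‖ ≤ Real.exp (2 * Real.pi * R) := by
  rw [zc, Complex.norm_exp, Real.exp_le_exp]
  have : (2 * (Real.pi : ℂ) * I * ξ).re = -(2 * Real.pi * ξ.im) := by
    simp [Complex.mul_re, Complex.mul_im]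
  rw [this]
  have h1 : |ξ.im| ≤ ‖ξ‖ := Complex.abs_im_le_norm ξ
  have h2 : ‖ξ‖ < R := by simpa [Complex.dist_eq] using hξ
  nlinarith [abs_nonneg ξ.im, neg_abs_le ξ.im, Real.pi_pos]

lemma abs_zc_inv_le {R : ℝ} (hR : 0 < R) {ξ : ℂ} (hξ : ξ ∈ ball (0:ℂ) R) :
    ‖(zc ξ)⁻¹‖ ≤ Real.exp (2 * Real.pi * R) := by
  rw [zc_inv]
  exact abs_zc_le hR (by simpa using hξ)

lemma triple_bound {a b c : ℂ} {δ : ℝ} (hδ : δ ≤ 1/2)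
    (ha : ‖a‖ ≤ δ) (hb : ‖b‖ ≤ δ) (hc : ‖c‖ ≤ δ) :
    ‖((1-a) * ((1-b) * (1-c)) - 1)‖ ≤ 5 * δ := by
  have hδ0 : 0 ≤ δ := le_trans (norm_nonneg a) ha
  have key : (1-a) * ((1-b) * (1-c)) - 1 = -(a*((1-b)*(1-c)) + (b*(1-c) + c)) := by ring
  rw [key]
  have hb' : ‖(1-b)‖ ≤ 1 + δ := by
    calc ‖(1-b)‖ = ‖(1 + -b)‖ := by rw [sub_eq_add_neg]
      _ ≤ ‖(1:ℂ)‖ + ‖(-b)‖ := norm_add_le _ _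
      _ = 1 + ‖b‖ := by simp
      _ ≤ 1 + δ := by linarith
  have hc' : ‖(1-c)‖ ≤ 1 + δ := by
    calc ‖(1-c)‖ = ‖(1 + -c)‖ := by rw [sub_eq_add_neg]
      _ ≤ ‖(1:ℂ)‖ + ‖(-c)‖ := norm_add_le _ _
      _ = 1 + ‖c‖ := by simp
      _ ≤ 1 + δ := by linarith
  have h1δ : (0:ℝ) ≤ 1 + δ := by linarith
  calc ‖(-(a*((1-b)*(1-c)) + (b*(1-c) + c)))‖
      = ‖(a*((1-b)*(1-c)) + (b*(1-c) + c))‖ := norm_neg _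
    _ ≤ ‖(a*((1-b)*(1-c)))‖ + (‖(b*(1-c))‖ + ‖c‖) := by
        refine le_trans (norm_add_le _ _) ?_
        gcongr
        exact norm_add_le _ _
    _ ≤ δ * ((1+δ)*(1+δ)) + (δ * (1+δ) + δ) := by
        simp only [norm_mul]
        gcongr
    _ ≤ 5 * δ := by
        have h2 : δ*δ ≤ (1/2)*δ := mul_le_mul_of_nonneg_right hδ hδ0
        have h3 : δ*δ*δ ≤ (1/2)*δ*δ := mul_le_mul_of_nonneg_right h2 hδ0
        nlinarith [h2, h3]

/-- On any ball around `0`, the infinite product splits as a finite product times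
the exponential of a differentiable function. -/
lemma rep (τ : ℂ) (hτ : 0 < τ.im) {R : ℝ} (hR : 0 < R) :
    ∃ N : ℕ, ∃ S : ℂ → ℂ, DifferentiableOn ℂ S (ball (0:ℂ) R) ∧
      (∀ ξ ∈ ball (0:ℂ) R, Pprod τ ξ =
        (∏ j ∈ Finset.range N, fac τ ξ j) * Complex.exp (S ξ)) := by
  set M : ℝ := Real.exp (2 * Real.pi * R) with hM
  have hM1 : 1 ≤ M := Real.one_le_exp (by positivity)
  have hq := hq_lt τ hτ
  have hq0 : (0:ℝ) ≤ ‖(qc τ)‖ := norm_nonneg _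
  obtain ⟨N, hN⟩ := exists_pow_lt_of_lt_one (show (0:ℝ) < 1/(10*M) by positivity) hq
  -- key bound : for ξ in the ball and any j, the (j+N)-th factor is within (1/2)|q|^j of 1
  have key : ∀ ξ ∈ ball (0:ℂ) R, ∀ j : ℕ,
      ‖(fac τ ξ (j+N) - 1)‖ ≤ (1/2) * ‖(qc τ)‖ ^ j := by
    intro ξ hξ j
    have hδ : (1/10) * ‖(qc τ)‖ ^ j ≤ 1/2 := by
      have : ‖(qc τ)‖ ^ j ≤ 1 := pow_le_one₀ hq0 hq.le
      nlinarith
    have hqN : M * ‖(qc τ)‖ ^ (N+1) ≤ 1/10 := by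
      have h1 : ‖(qc τ)‖ ^ (N+1) ≤ ‖(qc τ)‖ ^ N :=
        pow_le_pow_of_le_one hq0 hq.le (by omega)
      have h2 : ‖(qc τ)‖ ^ N ≤ 1/(10*M) := hN.le
      have hM0 : (0:ℝ) < M := by positivity
      calc M * ‖(qc τ)‖ ^ (N+1) ≤ M * (1/(10*M)) := by
            have := le_trans h1 h2
            exact mul_le_mul_of_nonneg_left this (le_of_lt hM0)
        _ = 1/10 := by field_simp
    have hexp : (j + N) + 1 = (N + 1) + j := by omega
    have habsq : ‖(qc τ ^ ((j+N)+1))‖ =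
        ‖(qc τ)‖ ^ (N+1) * ‖(qc τ)‖ ^ j := by
      rw [norm_pow, hexp, pow_add]
    have ha : ‖(zc ξ * qc τ ^ ((j+N)+1))‖ ≤ (1/10) * ‖(qc τ)‖ ^ j := by
      rw [norm_mul, habsq, ← mul_assoc]
      refine mul_le_mul_of_nonneg_right ?_ (pow_nonneg hq0 j)
      calc ‖(zc ξ)‖ * ‖(qc τ)‖ ^ (N+1)
          ≤ M * ‖(qc τ)‖ ^ (N+1) :=
            mul_le_mul_of_nonneg_right (abs_zc_le hR hξ) (pow_nonneg hq0 _)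
        _ ≤ 1/10 := hqN
    have hb : ‖((zc ξ)⁻¹ * qc τ ^ ((j+N)+1))‖ ≤ (1/10) * ‖(qc τ)‖ ^ j := by
      rw [norm_mul, habsq, ← mul_assoc]
      refine mul_le_mul_of_nonneg_right ?_ (pow_nonneg hq0 j)
      calc ‖(zc ξ)⁻¹‖ * ‖(qc τ)‖ ^ (N+1)
          ≤ M * ‖(qc τ)‖ ^ (N+1) :=
            mul_le_mul_of_nonneg_right (abs_zc_inv_le hR hξ) (pow_nonneg hq0 _)
        _ ≤ 1/10 := hqN
    have hc : ‖(qc τ ^ ((j+N)+1))‖ ≤ (1/10) * ‖(qc τ)‖ ^ j := by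
      rw [habsq]
      have h1 : ‖(qc τ)‖ ^ (N+1) ≤ M * ‖(qc τ)‖ ^ (N+1) := by
        nlinarith [pow_nonneg hq0 (N+1)]
      exact mul_le_mul_of_nonneg_right (le_trans h1 hqN) (pow_nonneg hq0 j)
    have h5 := triple_bound hδ ha hb hc
    simp only [fac]
    refine le_trans h5 (le_of_eq (by ring))
  -- consequences of the key bound
  have habs : ∀ ξ ∈ ball (0:ℂ) R, ∀ j : ℕ, ‖(fac τ ξ (j+N) - 1)‖ ≤ 1/2 := by
    intro ξ hξ j
    refine le_trans (key ξ hξ j) ?_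
    have : ‖(qc τ)‖ ^ j ≤ 1 := pow_le_one₀ hq0 hq.le
    nlinarith
  have hne : ∀ ξ ∈ ball (0:ℂ) R, ∀ j : ℕ, fac τ ξ (j+N) ≠ 0 := by
    intro ξ hξ j h0
    have := habs ξ hξ j
    rw [h0] at this
    simp at this
    norm_num at this
  have hslit : ∀ ξ ∈ ball (0:ℂ) R, ∀ j : ℕ, fac τ ξ (j+N) ∈ Complex.slitPlane := by
    intro ξ hξ j
    refine Complex.mem_slitPlane_iff.mpr (Or.inl ?_)
    have h1 : |(fac τ ξ (j+N) - 1).re| ≤ ‖(fac τ ξ (j+N) - 1)‖ :=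
      Complex.abs_re_le_norm _
    have h2 := habs ξ hξ j
    have h3 : (fac τ ξ (j+N)).re = 1 + (fac τ ξ (j+N) - 1).re := by
      simp [Complex.sub_re]
    rw [h3]
    cases abs_le.mp (le_trans h1 h2) with
    | intro hl hr => linarith
  have hlogbound : ∀ ξ ∈ ball (0:ℂ) R, ∀ j : ℕ,
      ‖Complex.log (fac τ ξ (j+N))‖ ≤ (3/4) * ‖(qc τ)‖ ^ j := by
    intro ξ hξ j
    have h1 : fac τ ξ (j+N) = 1 + (fac τ ξ (j+N) - 1) := by ring
    rw [h1]
    refine le_trans (Complex.norm_log_one_add_half_le_self ?_) ?_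
    · simpa using habs ξ hξ j
    · have := key ξ hξ j
      nlinarith [this]
  have hsum : Summable (fun j : ℕ => (3/4) * ‖(qc τ)‖ ^ j) :=
    (summable_geometric_of_lt_one hq0 hq).mul_left _
  refine ⟨N, fun ξ => ∑' j : ℕ, Complex.log (fac τ ξ (j+N)), ?_, ?_⟩
  · refine differentiableOn_tsum_of_summable_norm hsum ?_ isOpen_ball ?_
    · intro j ξ hξ
      exact (((fac_diff τ (j+N)) ξ).clog (hslit ξ hξ j)).differentiableWithinAt
    · intro j w hw
      exact hlogbound w hw j
  · intro ξ hξ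
    have hS : Summable (fun j : ℕ => Complex.log (fac τ ξ (j+N))) :=
      Summable.of_norm_bounded hsum (fun j => hlogbound ξ hξ j)
    have hmul_tail : Multipliable (fun j : ℕ => fac τ ξ (j+N)) :=
      Complex.multipliable_of_summable_log hS
    have hsplit := Multipliable.prod_mul_tprod_nat_mul' hmul_tail
    have hexp : Complex.exp (∑' j : ℕ, Complex.log (fac τ ξ (j+N))) =
        ∏' j : ℕ, fac τ ξ (j+N) := by
      have := Complex.cexp_tsum_eq_tprod (fun j => hne ξ hξ j) hS
      simpa using this
    rw [Pprod, ← hsplit, hexp]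

lemma Pprod_diffOn (τ : ℂ) (hτ : 0 < τ.im) {R : ℝ} (hR : 0 < R) :
    DifferentiableOn ℂ (Pprod τ) (ball (0:ℂ) R) := by
  obtain ⟨N, S, hS, hrep⟩ := rep τ hτ hR
  have hhead : DifferentiableOn ℂ (fun ξ => ∏ j ∈ Finset.range N, fac τ ξ j) (ball (0:ℂ) R) := by
    induction (Finset.range N) using Finset.induction_on with
    | empty => simpa using differentiableOn_const (1:ℂ)
    | insert a s h ih =>
      simp only [Finset.prod_insert h]
      exact ((fac_diff τ a).differentiableOn).mul ih
  have hbig : DifferentiableOn ℂ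
      (fun ξ => (∏ j ∈ Finset.range N, fac τ ξ j) * Complex.exp (S ξ)) (ball (0:ℂ) R) :=
    hhead.mul hS.cexp
  exact hbig.congr hrep

lemma theta_diffOn (τ : ℂ) (hτ : 0 < τ.im) {R : ℝ} (hR : 0 < R) :
    DifferentiableOn ℂ (fun ξ => theta ξ τ) (ball (0:ℂ) R) := by
  simp only [theta_eq]
  refine DifferentiableOn.mul ?_ (Pprod_diffOn τ hτ hR)
  refine DifferentiableOn.const_mul ?_ _
  refine DifferentiableOn.sub ?_ ?_
  · exact (Complex.differentiable_exp.comp (differentiable_id.const_mul _)).differentiableOn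
  · exact (Complex.differentiable_exp.comp
      ((differentiable_id.const_mul _).neg)).differentiableOn

lemma theta_zero (τ : ℂ) : theta 0 τ = 0 := by
  simp [theta_eq]

lemma theta_odd (τ ξ : ℂ) : theta (-ξ) τ = -theta ξ τ := by
  rw [theta_eq, theta_eq]
  have h1 : Pprod τ (-ξ) = Pprod τ ξ := by
    refine tprod_congr fun j => ?_
    rw [fac, fac, ← zc_inv, inv_inv]
    ring
  have h2 : (Real.pi : ℂ) * I * (-ξ) = -((Real.pi : ℂ) * I * ξ) := by ring
  rw [h1, h2, neg_neg]
  ring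

lemma Pprod_zero_ne (τ : ℂ) (hτ : 0 < τ.im) : Pprod τ 0 ≠ 0 := by
  obtain ⟨N, S, hS, hrep⟩ := rep τ hτ (one_pos)
  have h0 : (0:ℂ) ∈ ball (0:ℂ) 1 := mem_ball_self one_pos
  rw [hrep 0 h0]
  refine mul_ne_zero (Finset.prod_ne_zero_iff.mpr fun j _ => ?_) (Complex.exp_ne_zero _)
  have hz0 : zc 0 = 1 := by simp [zc]
  have hq := hq_lt τ hτ
  have hqj : ‖(qc τ ^ (j+1))‖ < 1 := by
    rw [norm_pow]; exact pow_lt_one₀ (norm_nonneg _) hq (by omega)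
  have h1 : (1 : ℂ) - qc τ ^ (j+1) ≠ 0 := by
    intro h
    rw [sub_eq_zero] at h
    rw [← h] at hqj
    simp at hqj
  rw [fac, hz0]
  simp only [inv_one, one_mul]
  exact mul_ne_zero h1 (mul_ne_zero h1 h1)

/-- Derivative of the theta function in its first variable. -/
noncomputable def thetaD (ξ τ : ℂ) : ℂ := deriv (fun ζ : ℂ => theta ζ τ) ξ

/-- Kronecker's function `F(ξ,α;τ) = θ′(0;τ)·θ(ξ+α;τ) / (θ(ξ;τ)·θ(α;τ))`. -/
noncomputable def Kron (ξ α τ : ℂ) : ℂ :=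
  thetaD 0 τ * theta (ξ + α) τ / (theta ξ τ * theta α τ)

lemma theta_hasDerivAt_zero (τ : ℂ) (hτ : 0 < τ.im) :
    HasDerivAt (fun ξ => theta ξ τ)
      (-I * Complex.exp ((Real.pi : ℂ) * I * τ / 4) * (2 * (Real.pi : ℂ) * I) * Pprod τ 0) 0 := by
  have hP : DifferentiableAt ℂ (Pprod τ) 0 :=
    (Pprod_diffOn τ hτ one_pos).differentiableAt (isOpen_ball.mem_nhds (mem_ball_self one_pos))
  have hP' : HasDerivAt (Pprod τ) (deriv (Pprod τ) 0) 0 := hP.hasDerivAt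
  have hlin : HasDerivAt (fun ξ : ℂ => (Real.pi : ℂ) * I * ξ) ((Real.pi : ℂ) * I) 0 := by
    simpa using (hasDerivAt_id (0:ℂ)).const_mul ((Real.pi : ℂ) * I)
  have he1 : HasDerivAt (fun ξ : ℂ => Complex.exp ((Real.pi : ℂ) * I * ξ)) ((Real.pi : ℂ) * I) 0 := by
    simpa using hlin.cexp
  have he2 : HasDerivAt (fun ξ : ℂ => Complex.exp (-((Real.pi : ℂ) * I * ξ)))
      (-((Real.pi : ℂ) * I)) 0 := by
    simpa using hlin.neg.cexp
  have hs : HasDerivAt (fun ξ : ℂ => Complex.exp ((Real.pi : ℂ) * I * ξ) -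
      Complex.exp (-((Real.pi : ℂ) * I * ξ))) (2 * (Real.pi : ℂ) * I) 0 := by
    have := he1.sub he2
    exact this.congr_deriv (by ring)
  have hg : HasDerivAt (fun ξ : ℂ => -I * Complex.exp ((Real.pi : ℂ) * I * τ / 4) *
      (Complex.exp ((Real.pi : ℂ) * I * ξ) - Complex.exp (-((Real.pi : ℂ) * I * ξ))))
      (-I * Complex.exp ((Real.pi : ℂ) * I * τ / 4) * (2 * (Real.pi : ℂ) * I)) 0 := by
    simpa [mul_assoc] using hs.const_mul (-I * Complex.exp ((Real.pi : ℂ) * I * τ / 4))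
  have hmul := hg.mul hP'
  have heq : (fun ξ : ℂ => (-I * Complex.exp ((Real.pi : ℂ) * I * τ / 4) *
      (Complex.exp ((Real.pi : ℂ) * I * ξ) - Complex.exp (-((Real.pi : ℂ) * I * ξ)))) *
      Pprod τ ξ) = fun ξ => theta ξ τ := by
    funext ξ; rw [theta_eq]
  rw [← heq]
  exact hmul.congr_deriv (by simp)

lemma thetaD_zero_ne (τ : ℂ) (hτ : 0 < τ.im) : thetaD 0 τ ≠ 0 := by
  rw [thetaD, (theta_hasDerivAt_zero τ hτ).deriv]
  refine mul_ne_zero (mul_ne_zero (mul_ne_zero (neg_ne_zero.mpr I_ne_zero)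
    (Complex.exp_ne_zero _)) ?_) (Pprod_zero_ne τ hτ)
  simp [Real.pi_ne_zero, I_ne_zero]

lemma theta_eventually_ne (τ : ℂ) (hτ : 0 < τ.im) :
    ∀ᶠ ξ in nhdsWithin (0 : ℂ) {(0 : ℂ)}ᶜ, theta ξ τ ≠ 0 := by
  have hP : DifferentiableAt ℂ (Pprod τ) 0 :=
    (Pprod_diffOn τ hτ one_pos).differentiableAt (isOpen_ball.mem_nhds (mem_ball_self one_pos))
  have hev1 : ∀ᶠ ξ in nhds (0:ℂ), Pprod τ ξ ≠ 0 :=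
    hP.continuousAt.eventually_ne (Pprod_zero_ne τ hτ)
  have hev2 : ∀ᶠ ξ in nhds (0:ℂ), ξ ∈ ball (0:ℂ) 1 := ball_mem_nhds _ one_pos
  filter_upwards [nhdsWithin_le_nhds hev1, nhdsWithin_le_nhds hev2,
    self_mem_nhdsWithin] with ξ hPne hball hne
  have hξ0 : ξ ≠ 0 := hne
  rw [theta_eq]
  refine mul_ne_zero (mul_ne_zero (mul_ne_zero (neg_ne_zero.mpr I_ne_zero)
    (Complex.exp_ne_zero _)) ?_) hPne
  intro hs0
  rw [sub_eq_zero, Complex.exp_eq_exp_iff_exists_int] at hs0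
  obtain ⟨n, hn⟩ := hs0
  have h2ne : (2 * (Real.pi : ℂ) * I) ≠ 0 := by
    simp [Real.pi_ne_zero, I_ne_zero]
  have h2 : (2 * (Real.pi : ℂ) * I) * ξ = (2 * (Real.pi : ℂ) * I) * (n : ℂ) := by
    linear_combination hn
  have hξn : ξ = (n : ℂ) := mul_left_cancel₀ h2ne h2
  have hn0 : n ≠ 0 := by
    rintro rfl
    simp [hξn] at hξ0
  have h1le : (1:ℝ) ≤ ‖((n : ℂ))‖ := by
    rw [Complex.norm_intCast]
    exact_mod_cast Int.one_le_abs hn0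
  have hlt : ‖ξ‖ < 1 := by simpa [Complex.dist_eq] using hball
  rw [hξn] at hlt
  linarith

/-- `F(·,α;τ)` has a simple pole at `ξ = 0` with residue `1` and
constant Laurent term `E₁(α;τ) = θ′(α;τ)/θ(α;τ)`: the function `ξ ↦ θ(ξ;τ)` is
nonvanishing on a punctured neighborhood of `0`, and `F(ξ,α;τ) - 1/ξ → θ′(α;τ)/θ(α;τ)`
as `ξ → 0`, `ξ ≠ 0`. -/
theorem stmt13 (τ : ℂ) (hτ : 0 < τ.im) (α : ℂ) (hθα : theta α τ ≠ 0) :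
    (∀ᶠ ξ in nhdsWithin (0 : ℂ) {(0 : ℂ)}ᶜ, theta ξ τ ≠ 0) ∧
    Filter.Tendsto (fun ξ : ℂ => Kron ξ α τ - 1 / ξ)
      (nhdsWithin (0 : ℂ) {(0 : ℂ)}ᶜ) (nhds (thetaD α τ / theta α τ)) := by
  refine ⟨theta_eventually_ne τ hτ, ?_⟩
  set R : ℝ := ‖α‖ + 1 with hRdef
  have hRpos : 0 < R := by positivity
  have hθdiff := theta_diffOn τ hτ hRpos
  have h0mem : (0:ℂ) ∈ ball (0:ℂ) R := mem_ball_self hRpos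
  have hαmem : α ∈ ball (0:ℂ) R := by
    simp only [mem_ball, Complex.dist_eq, sub_zero, hRdef]
    linarith
  have hθA : AnalyticAt ℂ (fun ξ => theta ξ τ) 0 :=
    hθdiff.analyticAt (isOpen_ball.mem_nhds h0mem)
  obtain ⟨p, hp⟩ := hθA
  set G : ℂ → ℂ := dslope (fun ξ => theta ξ τ) 0 with hGdef
  have hGanal : AnalyticAt ℂ G 0 := ⟨p.fslope, hp.has_fpower_series_dslope_fslope⟩
  have hG0 : G 0 = thetaD 0 τ := dslope_same _ _
  have hGne : ∀ ξ : ℂ, ξ ≠ 0 → G ξ = theta ξ τ / ξ := by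
    intro ξ h
    rw [hGdef, dslope_of_ne _ h, slope_def_field, theta_zero]
    simp
  have hGeven : ∀ ξ : ℂ, G (-ξ) = G ξ := by
    intro ξ
    rcases eq_or_ne ξ 0 with rfl | h
    · simp
    · rw [hGne _ (neg_ne_zero.mpr h), hGne _ h, theta_odd]
      rw [neg_div_neg_eq]
  have hGd : DifferentiableAt ℂ G 0 := hGanal.differentiableAt
  have hGderiv : HasDerivAt G (deriv G 0) 0 := hGd.hasDerivAt
  have hGderiv0 : deriv G 0 = 0 := by
    have hcomp : HasDerivAt (fun ξ => G (-ξ)) (deriv G 0 * (-1)) 0 := by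
      have h1 : HasDerivAt (fun ξ : ℂ => -ξ) (-1) 0 := hasDerivAt_neg 0
      have h2 : HasDerivAt G (deriv G 0) (-0 : ℂ) := by simpa using hGderiv
      exact h2.comp 0 h1
    have heq : (fun ξ => G (-ξ)) = G := funext hGeven
    rw [heq] at hcomp
    have h3 := hcomp.unique hGderiv
    linear_combination -h3 / 2
  have hA := thetaD_zero_ne τ hτ
  have hL2 : Filter.Tendsto G (nhdsWithin 0 {(0:ℂ)}ᶜ) (nhds (thetaD 0 τ)) := by
    have := hGd.continuousAt.tendsto
    rw [hG0] at this
    exact this.mono_left nhdsWithin_le_nhds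
  have hL3 : Filter.Tendsto (fun ξ => (G ξ - thetaD 0 τ) / ξ)
      (nhdsWithin 0 {(0:ℂ)}ᶜ) (nhds 0) := by
    have h := hasDerivAt_iff_tendsto_slope.mp (hGderiv0 ▸ hGderiv)
    have : (slope G 0) = fun ξ => (G ξ - thetaD 0 τ) / ξ := by
      funext ξ
      rw [slope_def_field, hG0]
      simp
    rwa [this] at h
  have hθαd : DifferentiableAt ℂ (fun ξ => theta ξ τ) α :=
    hθdiff.differentiableAt (isOpen_ball.mem_nhds hαmem)
  have hθα_deriv : HasDerivAt (fun ξ => theta ξ τ) (thetaD α τ) α := hθαd.hasDerivAt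
  have hshift : HasDerivAt (fun ξ => theta (ξ + α) τ) (thetaD α τ) 0 := by
    have h1 : HasDerivAt (fun ξ : ℂ => ξ + α) 1 0 := (hasDerivAt_id 0).add_const α
    have h2 : HasDerivAt (fun ξ => theta ξ τ) (thetaD α τ) ((0:ℂ) + α) := by
      simpa using hθα_deriv
    have := h2.comp 0 h1
    rw [mul_one] at this
    exact this
  have hL1 : Filter.Tendsto (fun ξ => (theta (ξ + α) τ - theta α τ) / ξ)
      (nhdsWithin 0 {(0:ℂ)}ᶜ) (nhds (thetaD α τ)) := by
    have h := hasDerivAt_iff_tendsto_slope.mp hshift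
    have heq : (slope (fun ξ => theta (ξ + α) τ) 0) =
        fun ξ => (theta (ξ + α) τ - theta α τ) / ξ := by
      funext ξ
      rw [slope_def_field]
      simp
    rwa [heq] at h
  have hden_ne : thetaD 0 τ * theta α τ ≠ 0 := mul_ne_zero hA hθα
  have hcomb : Filter.Tendsto (fun ξ =>
      (thetaD 0 τ * ((theta (ξ + α) τ - theta α τ) / ξ) -
        theta α τ * ((G ξ - thetaD 0 τ) / ξ)) / (G ξ * theta α τ))
      (nhdsWithin 0 {(0:ℂ)}ᶜ)
      (nhds ((thetaD 0 τ * thetaD α τ - theta α τ * 0) / (thetaD 0 τ * theta α τ))) :=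
    ((hL1.const_mul _).sub (hL3.const_mul _)).div (hL2.mul tendsto_const_nhds) hden_ne
  have hval : (thetaD 0 τ * thetaD α τ - theta α τ * 0) / (thetaD 0 τ * theta α τ) =
      thetaD α τ / theta α τ := by
    field_simp
    ring
  rw [hval] at hcomb
  refine Filter.Tendsto.congr' ?_ hcomb
  filter_upwards [theta_eventually_ne τ hτ, self_mem_nhdsWithin] with ξ hθξ hξ0'
  have hξ0 : ξ ≠ 0 := hξ0'
  rw [hGne ξ hξ0, Kron]
  field_simp
  ring
end

section
/- Let τ ∈ ℂ with ℑτ > 0, Λ = ℤτ + ℤ, let V be a finite-dimensional complex normed vector space, and let t : V → V be a nilpotent linear endomorphism. Suppose f : ℂ ∖ Λ → V satisfies f(ξ + 1) = f(ξ) and f(ξ + τ) = exp(−2πi·t)(f(ξ)) for all ξ ∉ Λ. Then for every ξ ∉ Λ with ξ + 1 ∉ Λ, ξ + τ ∉ Λ and θ(ξ; τ) ≠ 0, the function g(ζ) := exp(−E₁(ζ; τ)·t)(f(ζ)) satisfies g(ξ + 1) = g(ξ) and g(ξ + τ) = g(ξ), where E₁(ζ; τ) := θ′(ζ; τ)/θ(ζ;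 τ) and exp denotes the (finite) operator exponential of a nilpotent endomorphism. -/
open Complex

/-- The lattice `ℤτ + ℤ` inside `ℂ`. -/
def lattice (τ : ℂ) : Set ℂ := {ξ : ℂ | ∃ m n : ℤ, ξ = m * τ + n}

namespace Stmt16Aux

open Filter

noncomputable def qq (τ : ℂ) : ℂ := Complex.exp (2 * (Real.pi : ℂ) * I * τ)

noncomputable def AA (τ ζ : ℂ) (j : ℕ) : ℂ :=
  1 - Complex.exp (2 * (Real.pi : ℂ) * I * ζ) * qq τ ^ (j + 1)

noncomputable def BB (τ ζ : ℂ) (j : ℕ) : ℂ :=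
  1 - (Complex.exp (2 * (Real.pi : ℂ) * I * ζ))⁻¹ * qq τ ^ (j + 1)

noncomputable def CC (τ : ℂ) (j : ℕ) : ℂ := 1 - qq τ ^ (j + 1)

noncomputable def FF (τ ζ : ℂ) (j : ℕ) : ℂ := AA τ ζ j * (BB τ ζ j * CC τ j)

noncomputable def ss (τ ζ : ℂ) : ℂ :=
  -I * Complex.exp ((Real.pi : ℂ) * I * τ / 4) *
    (Complex.exp ((Real.pi : ℂ) * I * ζ) - Complex.exp (-((Real.pi : ℂ) * I * ζ)))

lemma theta_eq (τ ζ : ℂ) : theta ζ τ = ss τ ζ * ∏' j, FF τ ζ j := rfl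

lemma norm_exp_eq (w : ℂ) : ‖Complex.exp (2 * (Real.pi : ℂ) * I * w)‖ =
    Real.exp (-(2 * Real.pi * w.im)) := by
  rw [Complex.norm_exp]
  congr 1
  simp [Complex.mul_re, Complex.mul_im]

lemma norm_exp_inv_eq (w : ℂ) : ‖(Complex.exp (2 * (Real.pi : ℂ) * I * w))⁻¹‖ =
    Real.exp (2 * Real.pi * w.im) := by
  rw [norm_inv, norm_exp_eq, ← Real.exp_neg, neg_neg]

lemma norm_q_lt_one {τ : ℂ} (hτ : 0 < τ.im) : ‖qq τ‖ < 1 := by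
  rw [qq, norm_exp_eq, Real.exp_lt_one_iff]
  nlinarith [Real.pi_pos]

lemma summable_aux (c : ℝ) {r : ℝ} (h0 : 0 ≤ r) (h1 : r < 1) :
    Summable fun j : ℕ => c * r ^ (j + 1) := by
  exact ((summable_geometric_of_lt_one h0 h1).mul_left (c * r)).congr fun j => by
    rw [pow_succ]; ring

lemma summable_log_one_add {w : ℕ → ℂ} (hw : Summable fun j => ‖w j‖) :
    Summable fun j => Complex.log (1 + w j) := by
  apply Summable.of_norm_bounded_eventually (g := fun j => (3 / 2 : ℝ) * ‖w j‖) (hw.mul_left _)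
  have h0 : Tendsto (fun j => ‖w j‖) atTop (nhds 0) := hw.tendsto_atTop_zero
  rw [Nat.cofinite_eq_atTop]
  filter_upwards [h0.eventually (eventually_le_nhds (by norm_num : (0:ℝ) < 1/2))] with j hj
  exact Complex.norm_log_one_add_half_le_self hj

lemma cexp_tsum_log {w : ℕ → ℂ} (h0 : ∀ j, w j ≠ 0)
    (hl : Summable fun j => Complex.log (w j)) :
    Complex.exp (∑' j, Complex.log (w j)) = ∏' j, w j := by
  have := Complex.cexp_tsum_eq_tprod h0 hl
  exact this

lemma multipliable_of_log {w : ℕ → ℂ} (h0 : ∀ j, w j ≠ 0)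
    (hl : Summable fun j => Complex.log (w j)) : Multipliable w := by
  exact Complex.multipliable_of_summable_log hl

lemma near_one_facts {x : ℂ} (h : ‖x - 1‖ ≤ 1 / 2) :
    x ∈ Complex.slitPlane ∧ x ≠ 0 ∧ 1 / 2 ≤ ‖x‖ := by
  have h1 : |(x - 1).re| ≤ ‖x - 1‖ := Complex.abs_re_le_norm (x - 1)
  have h2 : ‖x‖ - ‖(1:ℂ)‖ ≥ -‖x - 1‖ := by
    have := abs_norm_sub_norm_le x 1
    have := abs_le.1 this
    linarith [this.1]
  simp only [norm_one] at h2
  have hx : (1:ℝ)/2 ≤ ‖x‖ := by linarith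
  have hre : 0 < x.re := by
    have : (x - 1).re = x.re - 1 := by simp
    rw [this] at h1
    have := abs_le.1 h1
    linarith [this.1]
  exact ⟨Or.inl hre, by intro h; simp [h] at hx; linarith, hx⟩

lemma prod3_near_one {a b c : ℂ} {d : ℝ} (hd : d ≤ 1 / 16) (ha : ‖a - 1‖ ≤ d)
    (hb : ‖b - 1‖ ≤ d) (hc : ‖c - 1‖ ≤ d) : ‖a * (b * c) - 1‖ ≤ 7 * d := by
  have hd0 : 0 ≤ d := le_trans (norm_nonneg _) ha
  have key : ∀ x : ℂ, ‖x - 1‖ ≤ d → ‖x‖ ≤ 2 := by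
    intro x hx
    have h1 : ‖x‖ ≤ ‖(1:ℂ)‖ + ‖x - 1‖ := by
      simpa using norm_add_le (1:ℂ) (x - 1)
    simp only [norm_one] at h1
    linarith
  have hbn := key b hb
  have hcn := key c hc
  have hdecomp : a * (b * c) - 1 = (a - 1) * (b * c) + ((b - 1) * c + (c - 1)) := by ring
  rw [hdecomp]
  calc ‖(a - 1) * (b * c) + ((b - 1) * c + (c - 1))‖
      ≤ ‖(a - 1) * (b * c)‖ + (‖(b - 1) * c‖ + ‖c - 1‖) := by
        refine (norm_add_le _ _).trans ?_
        gcongr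
        exact norm_add_le _ _
    _ ≤ d * (2 * 2) + (d * 2 + d) := by
        gcongr
        · rw [norm_mul]
          have : ‖b * c‖ ≤ 2 * 2 := by rw [norm_mul]; exact mul_le_mul hbn hcn (norm_nonneg _) (by norm_num)
          exact mul_le_mul ha this (norm_nonneg _) hd0
        · rw [norm_mul]
          exact mul_le_mul hb hcn (norm_nonneg _) hd0
    _ = 7 * d := by ring


lemma two_pi_I_ne : (2 * (Real.pi : ℂ) * I) ≠ 0 := by
  simp [Real.pi_ne_zero, Complex.I_ne_zero]

lemma CC_ne {τ : ℂ} (hτ : 0 < τ.im) (j : ℕ) : CC τ j ≠ 0 := by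
  rw [CC, sub_ne_zero]
  intro h
  have : ‖qq τ ^ (j + 1)‖ < 1 := by
    rw [norm_pow]
    exact pow_lt_one₀ (norm_nonneg _) (norm_q_lt_one hτ) (Nat.succ_ne_zero j)
  rw [← h] at this
  simp at this

lemma AA_ne {τ ζ : ℂ} (hζ : ζ ∉ lattice τ) (j : ℕ) : AA τ ζ j ≠ 0 := by
  rw [AA, sub_ne_zero]
  intro h
  rw [qq, ← Complex.exp_nat_mul, ← Complex.exp_add] at h
  replace h := h.symm
  rw [Complex.exp_eq_one_iff] at h
  obtain ⟨n, hn⟩ := h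
  apply hζ
  refine ⟨-(j + 1 : ℤ), n, ?_⟩
  have h2 : (2 * (Real.pi : ℂ) * I) * (ζ + ((j:ℂ) + 1) * τ) = (2 * (Real.pi : ℂ) * I) * n := by
    push_cast at hn ⊢
    linear_combination hn
  have h3 := mul_left_cancel₀ two_pi_I_ne h2
  push_cast
  linear_combination h3

lemma BB_ne {τ ζ : ℂ} (hζ : ζ ∉ lattice τ) (j : ℕ) : BB τ ζ j ≠ 0 := by
  rw [BB, sub_ne_zero]
  intro h
  rw [qq, ← Complex.exp_nat_mul, ← Complex.exp_neg, ← Complex.exp_add] at h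
  replace h := h.symm
  rw [Complex.exp_eq_one_iff] at h
  obtain ⟨n, hn⟩ := h
  apply hζ
  refine ⟨(j + 1 : ℤ), -n, ?_⟩
  have h2 : (2 * (Real.pi : ℂ) * I) * (-ζ + ((j:ℂ) + 1) * τ) = (2 * (Real.pi : ℂ) * I) * n := by
    push_cast at hn ⊢
    linear_combination hn
  have h3 := mul_left_cancel₀ two_pi_I_ne h2
  push_cast
  linear_combination -h3

lemma multipliable_AA {τ ζ : ℂ} (hτ : 0 < τ.im) (hζ : ζ ∉ lattice τ) :
    Multipliable (AA τ ζ) := by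
  apply multipliable_of_log (fun j => AA_ne hζ j)
  have : (fun j => Complex.log (AA τ ζ j)) =
      fun j => Complex.log (1 + -(Complex.exp (2 * (Real.pi : ℂ) * I * ζ) * qq τ ^ (j + 1))) := by
    funext j; rw [AA, sub_eq_add_neg]
  rw [this]
  apply summable_log_one_add
  apply ((summable_aux ‖Complex.exp (2 * (Real.pi : ℂ) * I * ζ)‖ (norm_nonneg _)
    (norm_q_lt_one hτ)).congr fun j => ?_)
  rw [norm_neg, norm_mul, norm_pow]

lemma multipliable_BB {τ ζ : ℂ} (hτ : 0 < τ.im) (hζ : ζ ∉ lattice τ) :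
    Multipliable (BB τ ζ) := by
  apply multipliable_of_log (fun j => BB_ne hζ j)
  have : (fun j => Complex.log (BB τ ζ j)) =
      fun j => Complex.log (1 + -((Complex.exp (2 * (Real.pi : ℂ) * I * ζ))⁻¹ * qq τ ^ (j + 1))) := by
    funext j; rw [BB, sub_eq_add_neg]
  rw [this]
  apply summable_log_one_add
  apply ((summable_aux ‖(Complex.exp (2 * (Real.pi : ℂ) * I * ζ))⁻¹‖ (norm_nonneg _)
    (norm_q_lt_one hτ)).congr fun j => ?_)
  rw [norm_neg, norm_mul, norm_pow]

lemma multipliable_CC {τ : ℂ} (hτ : 0 < τ.im) : Multipliable (CC τ) := by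
  apply multipliable_of_log (CC_ne hτ)
  have : (fun j => Complex.log (CC τ j)) =
      fun j => Complex.log (1 + -((1:ℂ) * qq τ ^ (j + 1))) := by
    funext j; rw [CC, sub_eq_add_neg, one_mul]
  rw [this]
  apply summable_log_one_add
  apply ((summable_aux (1:ℝ) (by norm_num) (norm_q_lt_one hτ)).congr fun j => ?_)
  rw [norm_neg, norm_mul, norm_pow, norm_one]

lemma lattice_add_tau {τ ζ : ℂ} (hζ : ζ ∉ lattice τ) : ζ + τ ∉ lattice τ := by
  intro ⟨m, n, h⟩
  exact hζ ⟨m - 1, n, by push_cast; linear_combination h⟩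

lemma AA_shift (τ ζ : ℂ) : AA τ (ζ + τ) = fun j => AA τ ζ (j + 1) := by
  funext j
  rw [AA, AA]
  congr 1
  rw [mul_add, Complex.exp_add]
  rw [show qq τ ^ (j + 1 + 1) = qq τ * qq τ ^ (j + 1) by rw [← pow_succ']]
  rw [qq]
  ring

lemma BB_shift (τ ζ : ℂ) (j : ℕ) : BB τ (ζ + τ) (j + 1) = BB τ ζ j := by
  rw [BB, BB]
  congr 1
  rw [mul_add, Complex.exp_add, mul_inv]
  rw [show qq τ ^ (j + 1 + 1) = qq τ * qq τ ^ (j + 1) by rw [← pow_succ']]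
  have h : (Complex.exp (2 * (Real.pi : ℂ) * I * τ))⁻¹ * (qq τ * qq τ ^ (j+1)) = qq τ ^ (j+1) := by
    rw [qq, inv_mul_cancel_left₀ (Complex.exp_ne_zero _)]
  rw [mul_assoc, h]

lemma BB_shift_zero (τ ζ : ℂ) : BB τ (ζ + τ) 0 = 1 - (Complex.exp (2 * (Real.pi : ℂ) * I * ζ))⁻¹ := by
  rw [BB]
  congr 1
  rw [mul_add, Complex.exp_add, mul_inv, pow_one, qq]
  rw [mul_assoc, inv_mul_cancel₀ (Complex.exp_ne_zero _), mul_one]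

lemma one_sub_z_inv_ne {τ ζ : ℂ} (hζ : ζ ∉ lattice τ) :
    1 - (Complex.exp (2 * (Real.pi : ℂ) * I * ζ))⁻¹ ≠ 0 := by
  rw [sub_ne_zero, ← Complex.exp_neg]
  intro h
  replace h := h.symm
  rw [Complex.exp_eq_one_iff] at h
  obtain ⟨n, hn⟩ := h
  apply hζ
  refine ⟨0, -n, ?_⟩
  have h2 : (2 * (Real.pi : ℂ) * I) * (-ζ) = (2 * (Real.pi : ℂ) * I) * n := by
    push_cast at hn ⊢
    linear_combination hn
  have h3 := mul_left_cancel₀ two_pi_I_ne h2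
  push_cast
  linear_combination -h3

lemma tprod_shift {τ ζ : ℂ} (hτ : 0 < τ.im) (hζ : ζ ∉ lattice τ) :
    (∏' j, FF τ (ζ + τ) j) =
      (1 - (Complex.exp (2 * (Real.pi : ℂ) * I * ζ))⁻¹) /
        (1 - Complex.exp (2 * (Real.pi : ℂ) * I * ζ) * qq τ) * ∏' j, FF τ ζ j := by
  have hζτ : ζ + τ ∉ lattice τ := lattice_add_tau hζ
  have hmA := multipliable_AA hτ hζ
  have hmB := multipliable_BB hτ hζ
  have hmC := multipliable_CC hτ
  have hmA' := multipliable_AA hτ hζτ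
  have hmB' := multipliable_BB hτ hζτ
  -- split products
  have hsplit : ∀ (ζ' : ℂ), Multipliable (AA τ ζ') → Multipliable (BB τ ζ') →
      (∏' j, FF τ ζ' j) = (∏' j, AA τ ζ' j) * ((∏' j, BB τ ζ' j) * (∏' j, CC τ j)) := by
    intro ζ' hA hB
    calc (∏' j, FF τ ζ' j) = ∏' j, AA τ ζ' j * (BB τ ζ' j * CC τ j) := rfl
      _ = (∏' j, AA τ ζ' j) * ∏' j, (BB τ ζ' j * CC τ j) := Multipliable.tprod_mul hA (hB.mul hmC)
      _ = (∏' j, AA τ ζ' j) * ((∏' j, BB τ ζ' j) * (∏' j, CC τ j)) := by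
          rw [Multipliable.tprod_mul hB hmC]
  rw [hsplit (ζ + τ) hmA' hmB', hsplit ζ hmA hmB]
  have hA0 : AA τ ζ 0 ≠ 0 := AA_ne hζ 0
  have mult_shiftA : Multipliable (fun j => AA τ ζ (j + 1)) := by
    rw [← AA_shift]; exact hmA'
  have eA : (∏' j, AA τ (ζ + τ) j) = (∏' j, AA τ ζ j) / AA τ ζ 0 := by
    rw [AA_shift, tprod_eq_zero_mul' mult_shiftA, mul_comm, mul_div_assoc,
      div_self hA0, mul_one]
  have mult_shiftB : Multipliable (fun j => BB τ (ζ + τ) (j + 1)) :=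
    hmB.congr fun j => (BB_shift τ ζ j).symm
  have eB : (∏' j, BB τ (ζ + τ) j) =
      (1 - (Complex.exp (2 * (Real.pi : ℂ) * I * ζ))⁻¹) * ∏' j, BB τ ζ j := by
    rw [tprod_eq_zero_mul' mult_shiftB, BB_shift_zero]
    congr 1
    exact tprod_congr fun j => BB_shift τ ζ j
  rw [eA, eB]
  rw [show 1 - Complex.exp (2 * (Real.pi : ℂ) * I * ζ) * qq τ = AA τ ζ 0 from by
    rw [AA, pow_one]]
  field_simp


lemma theta_add_one (τ ζ : ℂ) : theta (ζ + 1) τ = -theta ζ τ := by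
  rw [theta_eq, theta_eq]
  have hFF : (fun j => FF τ (ζ + 1) j) = fun j => FF τ ζ j := by
    funext j
    rw [FF, FF, AA, AA, BB, BB]
    rw [show 2 * (Real.pi : ℂ) * I * (ζ + 1) = 2 * (Real.pi : ℂ) * I * ζ + 2 * Real.pi * I
      from by ring]
    rw [Complex.exp_add, Complex.exp_two_pi_mul_I, mul_one]
  rw [hFF]
  have hs : ss τ (ζ + 1) = -ss τ ζ := by
    rw [ss, ss]
    rw [show (Real.pi : ℂ) * I * (ζ + 1) = (Real.pi : ℂ) * I * ζ + Real.pi * I from by ring]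
    rw [show -((Real.pi : ℂ) * I * ζ + (Real.pi : ℂ) * I) =
      -((Real.pi : ℂ) * I * ζ) + -((Real.pi:ℂ) * I) from by ring]
    rw [Complex.exp_add, Complex.exp_add, Complex.exp_pi_mul_I]
    rw [Complex.exp_neg, Complex.exp_neg, Complex.exp_pi_mul_I]
    ring
  rw [hs]
  ring

lemma theta_add_tau {τ ζ : ℂ} (hτ : 0 < τ.im) (hζ : ζ ∉ lattice τ) :
    theta (ζ + τ) τ =
      -Complex.exp (-((Real.pi : ℂ) * I * τ) - 2 * (Real.pi : ℂ) * I * ζ) * theta ζ τ := by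
  rw [theta_eq, theta_eq, tprod_shift hτ hζ]
  have hA0 : (1 - Complex.exp (2 * (Real.pi : ℂ) * I * ζ) * qq τ) ≠ 0 := by
    have := AA_ne hζ 0
    rwa [AA, pow_one] at this
  rw [ss, ss]
  -- abbreviations
  set a := Complex.exp ((Real.pi : ℂ) * I * ζ) with ha
  set b := Complex.exp ((Real.pi : ℂ) * I * τ) with hb
  have ha0 : a ≠ 0 := Complex.exp_ne_zero _
  have hb0 : b ≠ 0 := Complex.exp_ne_zero _
  have e1 : Complex.exp (2 * (Real.pi : ℂ) * I * ζ) = a ^ 2 := by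
    rw [ha, ← Complex.exp_nat_mul]
    congr 1
    push_cast
    ring
  have e2 : qq τ = b ^ 2 := by
    rw [qq, hb, ← Complex.exp_nat_mul]
    congr 1
    push_cast
    ring
  have e3 : Complex.exp (-((Real.pi : ℂ) * I * ζ)) = a⁻¹ := by
    rw [Complex.exp_neg]
  have e4 : Complex.exp (-((Real.pi : ℂ) * I * τ) - 2 * (Real.pi : ℂ) * I * ζ) =
      (b * a ^ 2)⁻¹ := by
    rw [show -((Real.pi : ℂ) * I * τ) - 2 * (Real.pi : ℂ) * I * ζ =
      -((Real.pi : ℂ) * I * τ + 2 * (Real.pi : ℂ) * I * ζ) from by ring]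
    rw [Complex.exp_neg, Complex.exp_add, e1, hb]
  have e5 : Complex.exp ((Real.pi : ℂ) * I * (ζ + τ)) = a * b := by
    rw [ha, hb, ← Complex.exp_add]
    congr 1
    ring
  have e6 : Complex.exp (-((Real.pi : ℂ) * I * (ζ + τ))) = (a * b)⁻¹ := by
    rw [Complex.exp_neg, e5]
  rw [e1, e2, e3, e4, e5, e6]
  rw [e1, e2] at hA0
  field_simp
  ring

lemma lattice_closed {τ : ℂ} (hτ : 0 < τ.im) : IsClosed (lattice τ) := by
  have hne : τ.im ≠ 0 := ne_of_gt hτ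
  have heq : lattice τ = (fun ζ : ℂ => (ζ.im / τ.im, ζ.re - ζ.im / τ.im * τ.re)) ⁻¹'
      (Set.range ((↑) : ℤ → ℝ) ×ˢ Set.range ((↑) : ℤ → ℝ)) := by
    ext ζ
    simp only [Set.mem_preimage, Set.mem_prod, Set.mem_range, lattice, Set.mem_setOf_eq]
    constructor
    · rintro ⟨m, n, rfl⟩
      have him : ((m : ℂ) * τ + (n : ℂ)).im = m * τ.im := by
        simp [Complex.add_im, Complex.mul_im]
      have hre : ((m : ℂ) * τ + (n : ℂ)).re = m * τ.re + n := by
        simp [Complex.add_re, Complex.mul_re]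
      rw [him, hre]
      constructor
      · exact ⟨m, by field_simp⟩
      · exact ⟨n, by field_simp; ring⟩
    · rintro ⟨⟨m, hm⟩, ⟨n, hn⟩⟩
      refine ⟨m, n, ?_⟩
      have him : ζ.im = m * τ.im := by
        have h := hm.symm
        field_simp at h
        linarith [h]
      apply Complex.ext
      · have h2 : ζ.re - ζ.im / τ.im * τ.re = n := hn.symm
        rw [him, mul_div_assoc, div_self hne, mul_one] at h2
        simp only [Complex.add_re, Complex.mul_re, Complex.intCast_re, Complex.intCast_im,
          Complex.ofReal_re]
        linarith [h2]
      · rw [him]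
        simp [Complex.add_im, Complex.mul_im]
  rw [heq]
  apply IsClosed.preimage
  · exact (Complex.continuous_im.div_const _).prodMk
      (Complex.continuous_re.sub ((Complex.continuous_im.div_const _).mul continuous_const))
  · exact (Int.isClosedEmbedding_coe_real.isClosed_range).prod
      (Int.isClosedEmbedding_coe_real.isClosed_range)


lemma ratio_bound {A B C A' B' : ℂ} {d : ℝ} (hd : d ≤ 1 / 16)
    (hA : ‖A - 1‖ ≤ d) (hB : ‖B - 1‖ ≤ d) (hC : ‖C - 1‖ ≤ d)
    (hA' : ‖A'‖ ≤ 8 * d) (hB' : ‖B'‖ ≤ 8 * d)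
    (hF : 1 / 2 ≤ ‖A * (B * C)‖) :
    ‖(A' * (B * C) + A * (B' * C)) / (A * (B * C))‖ ≤ 128 * d := by
  have hd0 : 0 ≤ d := le_trans (norm_nonneg _) hA
  have h2 : ∀ x : ℂ, ‖x - 1‖ ≤ d → ‖x‖ ≤ 2 := by
    intro x hx
    have h1 : ‖x‖ ≤ ‖(1:ℂ)‖ + ‖x - 1‖ := by simpa using norm_add_le (1:ℂ) (x - 1)
    simp only [norm_one] at h1
    linarith
  have hAn := h2 A hA
  have hBn := h2 B hB
  have hCn := h2 C hC
  have hnum : ‖A' * (B * C) + A * (B' * C)‖ ≤ 64 * d := by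
    calc ‖A' * (B * C) + A * (B' * C)‖ ≤ ‖A' * (B * C)‖ + ‖A * (B' * C)‖ := norm_add_le _ _
      _ = ‖A'‖ * (‖B‖ * ‖C‖) + ‖A‖ * (‖B'‖ * ‖C‖) := by simp [norm_mul]
      _ ≤ 8 * d * (2 * 2) + 2 * (8 * d * 2) := by gcongr
      _ = 64 * d := by ring
  rw [norm_div, div_le_iff₀ (by linarith : (0:ℝ) < ‖A * (B * C)‖)]
  nlinarith [hnum, hF]

lemma theta_differentiableAt {τ : ℂ} (hτ : 0 < τ.im) (ξ : ℂ) :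
    DifferentiableAt ℂ (fun ζ => theta ζ τ) ξ := by
  have hm0 : (0:ℝ) ≤ ‖qq τ‖ := norm_nonneg _
  have hm1 : ‖qq τ‖ < 1 := norm_q_lt_one hτ
  set m := ‖qq τ‖ with hmdef
  set M := Real.exp (2 * Real.pi * (|ξ.im| + 1)) with hMdef
  have hM1 : (1:ℝ) ≤ M := Real.one_le_exp (by positivity)
  obtain ⟨N, hN⟩ : ∃ N : ℕ, M * m ^ (N + 1) ≤ 1 / 16 := by
    have h := (tendsto_pow_atTop_nhds_zero_of_lt_one hm0 hm1).const_mul M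
    rw [mul_zero] at h
    have h2 := h.eventually (eventually_le_nhds (show (0:ℝ) < 1/16 by norm_num))
    obtain ⟨n₀, hn₀⟩ := Filter.eventually_atTop.1 h2
    exact ⟨n₀, hn₀ (n₀ + 1) (by omega)⟩
  have hMm0 : 0 ≤ M * m ^ (N + 1) := by positivity
  set t : Set ℂ := Complex.im ⁻¹' Set.Ioo (ξ.im - 1) (ξ.im + 1) with htdef
  have ht_open : IsOpen t := isOpen_Ioo.preimage Complex.continuous_im
  have ht_conn : IsPreconnected t :=
    ((convex_Ioo (ξ.im - 1) (ξ.im + 1)).linear_preimage Complex.imCLM.toLinearMap).isPreconnected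
  have hξt : ξ ∈ t := by
    simp only [htdef, Set.mem_preimage, Set.mem_Ioo]
    constructor <;> linarith
  -- bounds for the exponentials on t
  have hzb : ∀ ζ ∈ t, ‖Complex.exp (2 * (Real.pi : ℂ) * I * ζ)‖ ≤ M := by
    intro ζ hζ
    simp only [htdef, Set.mem_preimage, Set.mem_Ioo] at hζ
    rw [norm_exp_eq, hMdef, Real.exp_le_exp]
    nlinarith [Real.pi_pos, neg_abs_le ξ.im, le_abs_self ξ.im, hζ.1, hζ.2]
  have hzb' : ∀ ζ ∈ t, ‖(Complex.exp (2 * (Real.pi : ℂ) * I * ζ))⁻¹‖ ≤ M := by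
    intro ζ hζ
    simp only [htdef, Set.mem_preimage, Set.mem_Ioo] at hζ
    rw [norm_exp_inv_eq, hMdef, Real.exp_le_exp]
    nlinarith [Real.pi_pos, neg_abs_le ξ.im, le_abs_self ξ.im, hζ.1, hζ.2]
  -- per-term bounds
  have hu16 : ∀ k : ℕ, M * m ^ (N + 1) * m ^ k ≤ 1 / 16 := by
    intro k
    have h1 : m ^ k ≤ 1 := pow_le_one₀ hm0 hm1.le
    nlinarith [hMm0]
  have hpow : ∀ k : ℕ, m ^ (k + N + 1) = m ^ (N + 1) * m ^ k := by
    intro k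
    rw [← pow_add]
    congr 1
    omega
  have hA1 : ∀ ζ ∈ t, ∀ k : ℕ, ‖AA τ ζ (k + N) - 1‖ ≤ M * m ^ (N + 1) * m ^ k := by
    intro ζ hζ k
    rw [AA, show (1 : ℂ) - Complex.exp (2 * (Real.pi : ℂ) * I * ζ) * qq τ ^ (k + N + 1) - 1 =
      -(Complex.exp (2 * (Real.pi : ℂ) * I * ζ) * qq τ ^ (k + N + 1)) from by ring]
    rw [norm_neg, norm_mul, norm_pow, ← hmdef, hpow k, ← mul_assoc]
    gcongr
    exact hzb ζ hζ
  have hB1 : ∀ ζ ∈ t, ∀ k : ℕ, ‖BB τ ζ (k + N) - 1‖ ≤ M * m ^ (N + 1) * m ^ k := by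
    intro ζ hζ k
    rw [BB, show (1 : ℂ) - (Complex.exp (2 * (Real.pi : ℂ) * I * ζ))⁻¹ * qq τ ^ (k + N + 1) - 1 =
      -((Complex.exp (2 * (Real.pi : ℂ) * I * ζ))⁻¹ * qq τ ^ (k + N + 1)) from by ring]
    rw [norm_neg, norm_mul, norm_pow, ← hmdef, hpow k, ← mul_assoc]
    gcongr
    exact hzb' ζ hζ
  have hC1 : ∀ k : ℕ, ‖CC τ (k + N) - 1‖ ≤ M * m ^ (N + 1) * m ^ k := by
    intro k
    rw [CC, show (1 : ℂ) - qq τ ^ (k + N + 1) - 1 = -(qq τ ^ (k + N + 1)) from by ring]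
    rw [norm_neg, norm_pow, ← hmdef, hpow k]
    have h1 : 0 ≤ m ^ (N + 1) * m ^ k := by positivity
    nlinarith [h1]
  have hF1 : ∀ ζ ∈ t, ∀ k : ℕ, ‖FF τ ζ (k + N) - 1‖ ≤ 7 * (M * m ^ (N + 1) * m ^ k) := by
    intro ζ hζ k
    exact prod3_near_one (hu16 k) (hA1 ζ hζ k) (hB1 ζ hζ k) (hC1 k)
  have hFfacts : ∀ ζ ∈ t, ∀ k : ℕ, FF τ ζ (k + N) ∈ Complex.slitPlane ∧ FF τ ζ (k + N) ≠ 0 ∧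
      1 / 2 ≤ ‖FF τ ζ (k + N)‖ := by
    intro ζ hζ k
    apply near_one_facts
    have := hF1 ζ hζ k
    have h2 := hu16 k
    linarith
  -- derivatives of the factors
  have hAd : ∀ (j : ℕ) (ζ : ℂ), HasDerivAt (fun ζ => AA τ ζ j)
      (-(2 * (Real.pi : ℂ) * I * (Complex.exp (2 * (Real.pi : ℂ) * I * ζ) * qq τ ^ (j + 1)))) ζ := by
    intro j ζ
    have h1 : HasDerivAt (fun ζ : ℂ => 2 * (Real.pi : ℂ) * I * ζ) (2 * (Real.pi : ℂ) * I) ζ := by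
      simpa using (hasDerivAt_id ζ).const_mul (2 * (Real.pi : ℂ) * I)
    have h2 := ((h1.cexp).mul_const (qq τ ^ (j + 1))).const_sub 1
    refine h2.congr_deriv ?_
    ring
  have hBd : ∀ (j : ℕ) (ζ : ℂ), HasDerivAt (fun ζ => BB τ ζ j)
      (2 * (Real.pi : ℂ) * I * (Complex.exp (-(2 * (Real.pi : ℂ) * I * ζ)) * qq τ ^ (j + 1))) ζ := by
    intro j ζ
    have hrw : (fun ζ => BB τ ζ j) =
        fun ζ => 1 - Complex.exp (-(2 * (Real.pi : ℂ) * I * ζ)) * qq τ ^ (j + 1) := by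
      funext ζ
      rw [BB, Complex.exp_neg]
    rw [hrw]
    have h1 : HasDerivAt (fun ζ : ℂ => -(2 * (Real.pi : ℂ) * I * ζ)) (-(2 * (Real.pi : ℂ) * I)) ζ := by
      exact ((hasDerivAt_id ζ).const_mul (2 * (Real.pi : ℂ) * I)).neg.congr_deriv (by simp)
    have h2 := ((h1.cexp).mul_const (qq τ ^ (j + 1))).const_sub 1
    refine h2.congr_deriv ?_
    ring
  have hFd : ∀ (j : ℕ) (ζ : ℂ), HasDerivAt (fun ζ => FF τ ζ j)
      (-(2 * (Real.pi : ℂ) * I * (Complex.exp (2 * (Real.pi : ℂ) * I * ζ) * qq τ ^ (j + 1))) *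
          (BB τ ζ j * CC τ j) +
        AA τ ζ j * (2 * (Real.pi : ℂ) * I * (Complex.exp (-(2 * (Real.pi : ℂ) * I * ζ)) *
          qq τ ^ (j + 1)) * CC τ j)) ζ := by
    intro j ζ
    have h := (hAd j ζ).mul ((hBd j ζ).mul (hasDerivAt_const ζ (CC τ j)))
    refine h.congr_deriv ?_
    simp only [Pi.mul_apply]; ring
  have h2pi : ‖(2 * (Real.pi : ℂ) * I)‖ ≤ 8 := by
    have : ‖(2 * (Real.pi : ℂ) * I)‖ = 2 * Real.pi := by
      simp [map_mul,
        abs_of_pos Real.pi_pos]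
    rw [this]
    nlinarith [Real.pi_le_four]
  -- bound for the log-derivatives
  have hF'b : ∀ ζ ∈ t, ∀ k : ℕ,
      ‖(-(2 * (Real.pi : ℂ) * I * (Complex.exp (2 * (Real.pi : ℂ) * I * ζ) * qq τ ^ (k + N + 1))) *
          (BB τ ζ (k + N) * CC τ (k + N)) +
        AA τ ζ (k + N) * (2 * (Real.pi : ℂ) * I * (Complex.exp (-(2 * (Real.pi : ℂ) * I * ζ)) *
          qq τ ^ (k + N + 1)) * CC τ (k + N))) / (AA τ ζ (k + N) * (BB τ ζ (k + N) * CC τ (k + N)))‖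
        ≤ 128 * (M * m ^ (N + 1) * m ^ k) := by
    intro ζ hζ k
    have hFF := hFfacts ζ hζ k
    have h2pi' : ‖(2:ℂ)‖ * ‖(Real.pi:ℂ)‖ * ‖I‖ ≤ 8 := by simpa [norm_mul] using h2pi
    refine ratio_bound (hu16 k) (hA1 ζ hζ k) (hB1 ζ hζ k) (hC1 k) ?_ ?_ hFF.2.2
    · simp only [norm_neg, norm_mul, norm_pow, ← hmdef]
      rw [hpow k, show (8:ℝ) * (M * m ^ (N + 1) * m ^ k) =
        8 * (M * (m ^ (N + 1) * m ^ k)) from by ring]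
      gcongr
      exact hzb ζ hζ
    · simp only [Complex.exp_neg, norm_mul, norm_pow, ← hmdef]
      rw [hpow k, show (8:ℝ) * (M * m ^ (N + 1) * m ^ k) =
        8 * (M * (m ^ (N + 1) * m ^ k)) from by ring]
      gcongr
      exact hzb' ζ hζ
  -- summability of logs at any point of t
  have hsumlog : ∀ ζ ∈ t, Summable fun k : ℕ => Complex.log (FF τ ζ (k + N)) := by
    intro ζ hζ
    have hw : Summable fun k : ℕ => ‖FF τ ζ (k + N) - 1‖ := by
      apply Summable.of_nonneg_of_le (fun k => norm_nonneg _) (fun k => hF1 ζ hζ k)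
      exact ((summable_geometric_of_lt_one hm0 hm1).mul_left (7 * (M * m ^ (N + 1)))).congr
        (fun k => by ring)
    exact (summable_log_one_add hw).congr (fun k => by rw [add_sub_cancel])
  -- the derivative of the log-tail sum
  have key : HasDerivAt (fun ζ => ∑' k : ℕ, Complex.log (FF τ ζ (k + N)))
      (∑' k : ℕ,
        (-(2 * (Real.pi : ℂ) * I * (Complex.exp (2 * (Real.pi : ℂ) * I * ξ) * qq τ ^ (k + N + 1))) *
          (BB τ ξ (k + N) * CC τ (k + N)) +
        AA τ ξ (k + N) * (2 * (Real.pi : ℂ) * I * (Complex.exp (-(2 * (Real.pi : ℂ) * I * ξ)) *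
          qq τ ^ (k + N + 1)) * CC τ (k + N))) / (AA τ ξ (k + N) * (BB τ ξ (k + N) * CC τ (k + N)))) ξ := by
    apply hasDerivAt_tsum_of_isPreconnected
      (u := fun k : ℕ => 128 * (M * m ^ (N + 1)) * m ^ k)
      (((summable_geometric_of_lt_one hm0 hm1).mul_left (128 * (M * m ^ (N + 1)))))
      ht_open ht_conn ?_ ?_ hξt ?_ hξt
    · intro n y hy
      exact (hFd (n + N) y).clog (hFfacts y hy n).1
    · intro n y hy
      have := hF'b y hy n
      calc _ ≤ 128 * (M * m ^ (N + 1) * m ^ n) := this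
        _ = 128 * (M * m ^ (N + 1)) * m ^ n := by ring
    · exact hsumlog ξ hξt
  -- the local product representation of theta
  have hrep : ∀ ζ ∈ t, theta ζ τ = ss τ ζ * ((∏ j ∈ Finset.range N, FF τ ζ j) *
      Complex.exp (∑' k : ℕ, Complex.log (FF τ ζ (k + N)))) := by
    intro ζ hζ
    have hne : ∀ k : ℕ, FF τ ζ (k + N) ≠ 0 := fun k => (hFfacts ζ hζ k).2.1
    have hsum := hsumlog ζ hζ
    have hmult : Multipliable fun k : ℕ => FF τ ζ (k + N) := multipliable_of_log hne hsum
    rw [cexp_tsum_log hne hsum, Multipliable.prod_mul_tprod_nat_mul' hmult]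
    exact theta_eq τ ζ
  -- assemble differentiability
  have hs_diff : DifferentiableAt ℂ (fun ζ => ss τ ζ) ξ := by
    apply DifferentiableAt.const_mul
    apply DifferentiableAt.sub
    · exact (differentiableAt_id.const_mul _).cexp
    · exact ((differentiableAt_id.const_mul _).neg).cexp
  have hP_diff : ∀ n : ℕ, DifferentiableAt ℂ (fun ζ => ∏ j ∈ Finset.range n, FF τ ζ j) ξ := by
    intro n
    induction n with
    | zero => simpa using differentiableAt_const (1 : ℂ)
    | succ n ih =>
      simp only [Finset.prod_range_succ]
      exact ih.mul ((hFd n ξ).differentiableAt)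
  have hRHS : DifferentiableAt ℂ (fun ζ => ss τ ζ * ((∏ j ∈ Finset.range N, FF τ ζ j) *
      Complex.exp (∑' k : ℕ, Complex.log (FF τ ζ (k + N))))) ξ :=
    hs_diff.mul ((hP_diff N).mul key.differentiableAt.cexp)
  exact hRHS.congr_of_eventuallyEq (Filter.eventuallyEq_of_mem (ht_open.mem_nhds hξt) hrep)


lemma E_per1 (τ ξ : ℂ) :
    thetaD (ξ + 1) τ / theta (ξ + 1) τ = thetaD ξ τ / theta ξ τ := by
  have h1 : thetaD (ξ + 1) τ = -thetaD ξ τ := by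
    rw [thetaD, ← deriv_comp_add_const (fun ζ => theta ζ τ) 1 ξ]
    have h : (fun x => theta (x + 1) τ) = fun x => -theta x τ :=
      funext fun x => theta_add_one τ x
    rw [h, deriv.fun_neg, thetaD]
  rw [h1, theta_add_one τ ξ, neg_div_neg_eq]

lemma E_pertau {τ : ℂ} (hτ : 0 < τ.im) {ξ : ℂ} (hξ : ξ ∉ lattice τ)
    (hθ : theta ξ τ ≠ 0) :
    thetaD (ξ + τ) τ / theta (ξ + τ) τ =
      thetaD ξ τ / theta ξ τ - 2 * (Real.pi : ℂ) * I := by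
  have hD : HasDerivAt (fun ζ => theta ζ τ) (thetaD ξ τ) ξ :=
    (theta_differentiableAt hτ ξ).hasDerivAt
  have hcd : HasDerivAt (fun ζ : ℂ => -Complex.exp (-((Real.pi : ℂ) * I * τ) -
      2 * (Real.pi : ℂ) * I * ζ))
      (2 * (Real.pi : ℂ) * I * Complex.exp (-((Real.pi : ℂ) * I * τ) -
        2 * (Real.pi : ℂ) * I * ξ)) ξ := by
    have h1 : HasDerivAt (fun ζ : ℂ => 2 * (Real.pi : ℂ) * I * ζ) (2 * (Real.pi : ℂ) * I) ξ := by
      simpa using (hasDerivAt_id ξ).const_mul (2 * (Real.pi : ℂ) * I)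
    have h2 := ((h1.const_sub (-((Real.pi : ℂ) * I * τ))).cexp).neg
    refine h2.congr_deriv ?_
    ring
  have hmul := hcd.mul hD
  have hopen : IsOpen (lattice τ)ᶜ := (lattice_closed hτ).isOpen_compl
  have heq : (fun ζ => theta (ζ + τ) τ) =ᶠ[nhds ξ]
      (fun ζ => -Complex.exp (-((Real.pi : ℂ) * I * τ) - 2 * (Real.pi : ℂ) * I * ζ) *
        theta ζ τ) := by
    apply Filter.eventuallyEq_of_mem (hopen.mem_nhds hξ)
    intro ζ hζ
    exact theta_add_tau hτ hζ
  have hDτ : thetaD (ξ + τ) τ =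
      2 * (Real.pi : ℂ) * I * Complex.exp (-((Real.pi : ℂ) * I * τ) -
        2 * (Real.pi : ℂ) * I * ξ) * theta ξ τ +
      -Complex.exp (-((Real.pi : ℂ) * I * τ) - 2 * (Real.pi : ℂ) * I * ξ) * thetaD ξ τ := by
    rw [thetaD, ← deriv_comp_add_const (fun ζ => theta ζ τ) τ ξ, heq.deriv_eq]
    exact hmul.deriv
  have hθτ : theta (ξ + τ) τ =
      -Complex.exp (-((Real.pi : ℂ) * I * τ) - 2 * (Real.pi : ℂ) * I * ξ) * theta ξ τ :=
    theta_add_tau hτ hξ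
  rw [hDτ, hθτ]
  have hE0 : Complex.exp (-((Real.pi : ℂ) * I * τ) - 2 * (Real.pi : ℂ) * I * ξ) ≠ 0 :=
    Complex.exp_ne_zero _
  field_simp
  ring

end Stmt16Aux

/-- (Claim of 5.1.2.)  For a nilpotent endomorphism `t` of a
finite-dimensional complex normed space `V` and a quasi-periodic function `f`
with multiplier `exp(-2πi·t)`, the gauge transform
`g(ζ) = exp(-E₁(ζ;τ)·t)(f(ζ))` (with `E₁ = θ′/θ`) is doubly periodic at
every point `ξ` where it makes sense. -/
theorem stmt16 {V : Type*} [NormedAddCommGroup V] [NormedSpace ℂ V]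
    [FiniteDimensional ℂ V]
    (τ : ℂ) (hτ : 0 < τ.im)
    (t : V →L[ℂ] V) (ht : IsNilpotent t)
    (f : ℂ → V)
    (hper1 : ∀ ξ : ℂ, ξ ∉ lattice τ → f (ξ + 1) = f ξ)
    (hperτ : ∀ ξ : ℂ, ξ ∉ lattice τ →
      f (ξ + τ) = NormedSpace.exp ((-(2 * (Real.pi : ℂ) * I)) • t) (f ξ))
    (g : ℂ → V)
    (hg : ∀ ζ : ℂ, g ζ = NormedSpace.exp ((-(thetaD ζ τ / theta ζ τ)) • t) (f ζ))
    (ξ : ℂ) (hξ : ξ ∉ lattice τ) (hξ1 : ξ + 1 ∉ lattice τ) (hξτ : ξ + τ ∉ lattice τ)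
    (hθ : theta ξ τ ≠ 0) :
    g (ξ + 1) = g ξ ∧ g (ξ + τ) = g ξ := by
  constructor
  · rw [hg (ξ + 1), hg ξ, Stmt16Aux.E_per1 τ ξ, hper1 ξ hξ]
  · rw [hg (ξ + τ), hg ξ, Stmt16Aux.E_pertau hτ hξ hθ, hperτ ξ hξ]
    set E := thetaD ξ τ / theta ξ τ with hE
    have hcomm : Commute ((-(E - 2 * (Real.pi : ℂ) * I)) • t) ((-(2 * (Real.pi : ℂ) * I)) • t) := by
      have : ((-(E - 2 * (Real.pi : ℂ) * I)) • t) * ((-(2 * (Real.pi : ℂ) * I)) • t) =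
          ((-(2 * (Real.pi : ℂ) * I)) • t) * ((-(E - 2 * (Real.pi : ℂ) * I)) • t) := by
        rw [smul_mul_assoc, mul_smul_comm, smul_mul_assoc, mul_smul_comm, smul_comm]
      exact this
    let +nondep : NormedAlgebra ℚ (V →L[ℂ] V) := .restrictScalars ℚ ℂ (V →L[ℂ] V)
    rw [← ContinuousLinearMap.mul_apply, ← NormedSpace.exp_add_of_commute hcomm]
    have harg : (-(E - 2 * (Real.pi : ℂ) * I)) • t + (-(2 * (Real.pi : ℂ) * I)) • t =
        (-E) • t := by
      rw [← add_smul]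
      congr 1
      ring
    rw [harg]
end
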